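/- arXiv:1510.02289 — 6 statements merged into one kernel-verified Lean document; each statement's English description precedes it below -/
import Mathlib

section
/- Let W = W(1,(l)) be the Witt algebra over a field of characteristic 2 with l ≥ 2. Then the derived subalgebra W' has dimension 2^l - 1, i.e., codimension 1 in W; specifically W' is spanned by a_0, ..., a_{2^l - 2} and a_{2^l-1} is not in W'. -/
/-!
The element `a₀` acts as `d/dx`: `⁅a₀, a_{k+1}⁆ = a_k`, so every `a_k` with `k < 2^l - 1` is a
bracket. Conversely, a bracket of basis vectors can only hit `a_{2^l-1}` when `i + j = 2^l`, and
then its coefficient `C(2^l-1, i) - C(2^l-1, j)` vanishes in characteristic 2 because every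
`C(2^l-1, i)` is odd (Pascal's rule, together with `2 ∣ C(2^l, i)` for `0 < i < 2^l`). Hence `W'`
is spanned by all basis vectors but the last.
-/

open LieAlgebra Module Submodule

theorem Nat.odd_choose_two_pow_sub_one {l i : ℕ} (hi : i < 2 ^ l) :
    Odd ((2 ^ l - 1).choose i) := by
  induction i with
  | zero => simp
  | succ i ih =>
    have hpascal : (2 ^ l).choose (i + 1) = (2 ^ l - 1).choose i + (2 ^ l - 1).choose (i + 1) := by
      rw [← Nat.choose_succ_succ', Nat.sub_add_cancel Nat.one_le_two_pow]
    have heven : Even ((2 ^ l).choose (i + 1)) :=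
      even_iff_two_dvd.mpr (Nat.prime_two.dvd_choose_pow i.succ_ne_zero hi.ne)
    rw [hpascal, Nat.even_add] at heven
    exact Nat.not_even_iff_odd.mp fun h => Nat.not_even_iff_odd.mpr (ih (by omega)) (heven.mpr h)

theorem LieAlgebra.derivedSeries_one_eq_span (R L : Type*) [CommRing R] [LieRing L]
    [LieAlgebra R L] :
    (derivedSeries R L 1 : Submodule R L) = span R {z | ∃ x y : L, ⁅x, y⁆ = z} := by
  rw [derivedSeries_def, derivedSeriesOfIdeal_succ, derivedSeriesOfIdeal_zero,
    LieIdeal.toLieSubalgebra_toSubmodule, LieSubmodule.lieIdeal_oper_eq_linear_span']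
  simp only [LieSubmodule.mem_top, true_and]

theorem lie_mem_of_span_eq_top {R L : Type*} [CommRing R] [LieRing L] [LieAlgebra R L]
    {s : Set L} (hs : span R s = ⊤) {S : Submodule R L} (h : ∀ x ∈ s, ∀ y ∈ s, ⁅x, y⁆ ∈ S)
    (x y : L) : ⁅x, y⁆ ∈ S := by
  have hxy : ⁅x, y⁆ ∈ map₂ (LieModule.toEnd R L L : L →ₗ[R] L →ₗ[R] L) (span R s) (span R s) :=
    apply_mem_map₂ _ (hs ▸ mem_top) (hs ▸ mem_top)
  rw [map₂_span_span] at hxy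
  refine span_le.mpr ?_ hxy
  rintro _ ⟨x, hx, y, hy, rfl⟩
  exact h x hx y hy

def IsWittBracket (F : Type*) {L : Type*} [Field F] [LieRing L] [LieAlgebra F L] (l : ℕ)
    (a : ℕ → L) : Prop :=
  ∀ i j, i ≤ 2 ^ l - 1 → j ≤ 2 ^ l - 1 →
    ⁅a i, a j⁆ = ((Nat.choose (i + j - 1) i : F) - (Nat.choose (i + j - 1) j : F)) • a (i + j - 1)

section WittAlgebra

variable {F L : Type*} [Field F] [LieRing L] [LieAlgebra F L] {l : ℕ} {a : ℕ → L}

theorem IsWittBracket.lie_zero_succ (h : IsWittBracket F l a) {k : ℕ} (hk : k + 1 ≤ 2 ^ l - 1) :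
    ⁅a 0, a (k + 1)⁆ = a k := by
  simp [h 0 (k + 1) (Nat.zero_le _) hk]

theorem IsWittBracket.lie_mem_span_Iio [CharP F 2] (h : IsWittBracket F l a)
    (ha0 : ∀ k, 2 ^ l - 1 < k → a k = 0) {i j : ℕ} (hi : i ≤ 2 ^ l - 1) (hj : j ≤ 2 ^ l - 1) :
    ⁅a i, a j⁆ ∈ span F (a '' Set.Iio (2 ^ l - 1)) := by
  rw [h i j hi hj]
  rcases lt_trichotomy (i + j - 1) (2 ^ l - 1) with hlt | heq | hgt
  · exact smul_mem _ _ (subset_span ⟨_, hlt, rfl⟩)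
  · have hodd {n : ℕ} (hn : n ≤ 2 ^ l - 1) : ((2 ^ l - 1).choose n : F) = 1 :=
      natCast_eq_one_of_odd_of_two_eq_zero
        (Nat.odd_choose_two_pow_sub_one (Nat.lt_of_le_sub_one (Nat.two_pow_pos l) hn))
        CharTwo.two_eq_zero
    simp [heq, hodd hi, hodd hj]
  · simp [ha0 _ hgt]

end WittAlgebra

section BasisPrefix

variable {R M : Type*} [Ring R] [AddCommGroup M] [Module R M] {n m : ℕ}
  {a : ℕ → M} (b : Basis (Fin n) R M)

theorem range_basis_comp_castLE (hb : ∀ i : Fin n, b i = a i) (hm : m ≤ n) :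
    Set.range (b ∘ Fin.castLE hm) = a '' Set.Iio m := by
  ext x
  constructor
  · rintro ⟨i, rfl⟩
    exact ⟨i, i.isLt, (hb (Fin.castLE hm i)).symm⟩
  · rintro ⟨k, hk, rfl⟩
    exact ⟨⟨k, hk⟩, hb _⟩

theorem finrank_span_image_Iio [Nontrivial R] [StrongRankCondition R]
    (hb : ∀ i : Fin n, b i = a i) (hm : m ≤ n) :
    finrank R (span R (a '' Set.Iio m)) = m := by
  rw [← range_basis_comp_castLE b hb hm,
    finrank_span_eq_card (b.linearIndependent.comp _ (Fin.castLE_injective hm)), Fintype.card_fin]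

theorem apply_notMem_span_image_Iio [Nontrivial R] (hb : ∀ i : Fin n, b i = a i) (hm : m < n) :
    a m ∉ span R (a '' Set.Iio m) := by
  rw [← range_basis_comp_castLE b hb hm.le, Set.range_comp, ← hb ⟨m, hm⟩, b.self_mem_span_image]
  rintro ⟨i, hi⟩
  exact i.isLt.ne (congrArg Fin.val hi)

end BasisPrefix

theorem witt_derived_codim_one_general
    (F : Type*) [Field F] [CharP F 2] (l : ℕ)
    (L : Type*) [LieRing L] [LieAlgebra F L]
    (a : ℕ → L) (b : Module.Basis (Fin (2 ^ l)) F L)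
    (hb : ∀ i : Fin (2 ^ l), b i = a i)
    (ha0 : ∀ k, 2 ^ l - 1 < k → a k = 0)
    (hbracket : ∀ i j, i ≤ 2 ^ l - 1 → j ≤ 2 ^ l - 1 →
      ⁅a i, a j⁆ =
        ((Nat.choose (i + j - 1) i : F) - (Nat.choose (i + j - 1) j : F)) • a (i + j - 1)) :
    (LieAlgebra.derivedSeries F L 1 : Submodule F L)
        = Submodule.span F (a '' Set.Iio (2 ^ l - 1)) ∧
      a (2 ^ l - 1) ∉ LieAlgebra.derivedSeries F L 1 ∧
      Module.finrank F (LieAlgebra.derivedSeries F L 1) = 2 ^ l - 1 := by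
  have hW : IsWittBracket F l a := hbracket
  have hpos : 0 < 2 ^ l := Nat.two_pow_pos l
  have hderived : (derivedSeries F L 1 : Submodule F L) = span F (a '' Set.Iio (2 ^ l - 1)) := by
    rw [derivedSeries_one_eq_span]
    apply le_antisymm
    · refine span_le.mpr ?_
      rintro _ ⟨x, y, rfl⟩
      refine lie_mem_of_span_eq_top b.span_eq ?_ x y
      rintro _ ⟨i, rfl⟩ _ ⟨j, rfl⟩
      rw [hb, hb]
      exact hW.lie_mem_span_Iio ha0 (by omega) (by omega)
    · refine span_le.mpr ?_
      rintro _ ⟨k, hk, rfl⟩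
      exact subset_span ⟨a 0, a (k + 1), hW.lie_zero_succ hk⟩
  refine ⟨hderived, fun hmem => ?_, ?_⟩
  · refine apply_notMem_span_image_Iio b hb (m := 2 ^ l - 1) (by omega) ?_
    rw [← hderived]
    exact hmem
  · rw [← finrank_span_image_Iio b hb (by omega : 2 ^ l - 1 ≤ 2 ^ l), ← hderived]
    rfl

/-- For the Witt algebra `W = W(1,(l))` over a field of characteristic 2
with `l ≥ 2`, the derived subalgebra `W' = [W,W]` is spanned by `a₀, …, a_{2^l-2}`,
does not contain `a_{2^l-1}`, and has dimension `2^l - 1` (codimension 1). -/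
theorem witt_derived_codim_one
    (F : Type*) [Field F] [CharP F 2] (l : ℕ) (hl : 2 ≤ l)
    (L : Type*) [LieRing L] [LieAlgebra F L]
    (a : ℕ → L) (b : Module.Basis (Fin (2 ^ l)) F L)
    (hb : ∀ i : Fin (2 ^ l), b i = a i)
    (ha0 : ∀ k, 2 ^ l - 1 < k → a k = 0)
    (hbracket : ∀ i j, i ≤ 2 ^ l - 1 → j ≤ 2 ^ l - 1 →
      ⁅a i, a j⁆ =
        ((Nat.choose (i + j - 1) i : F) - (Nat.choose (i + j - 1) j : F)) • a (i + j - 1)) :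
    (LieAlgebra.derivedSeries F L 1 : Submodule F L)
        = Submodule.span F (a '' Set.Iio (2 ^ l - 1)) ∧
      a (2 ^ l - 1) ∉ LieAlgebra.derivedSeries F L 1 ∧
      Module.finrank F (LieAlgebra.derivedSeries F L 1) = 2 ^ l - 1 :=
  witt_derived_codim_one_general F l L a b hb ha0 hbracket
end

section
/- Let W = W(1,(l)) be the Witt algebra over a field of characteristic 2 with l ≥ 2. Then the derived subalgebra W' is a simple Lie algebra of dimension 2^l - 1. -/
/-!
In characteristic 2 every `(2 ^ l - 1).choose k` is odd (Lucas), so `⁅a i, a j⁆ = 0` whenever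
`i + j = 2 ^ l`, and `W'` is spanned by `a 0, …, a (2 ^ l - 2)`, all of which lie in `W'` because
`⁅a 0, a (k + 1)⁆ = a k`. Thus `ad (a 0)` lowers the basis, so it is nilpotent with kernel `F ∙ a 0`,
and every nonzero subspace of `W` stable under `ad W'` contains `a 0`. Bracketing `a 0` with
`a (k + 1)`, and using `⁅a 2, a (2 ^ l - 3)⁆ = a (2 ^ l - 2)`, such a subspace contains `W'`;
applied to the image of a nonzero ideal of `W'` this gives simplicity.
-/

namespace Module.End

variable {R M : Type*} [CommRing R] [AddCommGroup M] [Module R M]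

theorem exists_pow_apply_ne_zero_and_apply_eq_zero {f : Module.End R M} {x : M}
    (hx : x ≠ 0) {N : ℕ} (hN : (f ^ N) x = 0) : ∃ m, (f ^ m) x ≠ 0 ∧ f ((f ^ m) x) = 0 := by
  induction N generalizing x with
  | zero => exact absurd hN hx
  | succ N ih =>
    by_cases hfx : f x = 0
    · exact ⟨0, hx, hfx⟩
    · rw [pow_succ, mul_apply] at hN
      obtain ⟨m, hm⟩ := ih hfx hN
      exact ⟨m + 1, by rwa [pow_succ, mul_apply]⟩

variable {K V : Type*} [Field K] [AddCommGroup V] [Module K V] {n : ℕ}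
  (b : Module.Basis (Fin n) K V) {e : ℕ → V} (hb : ∀ i : Fin n, b i = e i)
  {f : Module.End K V} (hf0 : f (e 0) = 0) (hf : ∀ k, k + 1 < n → f (e (k + 1)) = e k)
include hb hf0 hf

theorem pow_eq_zero_of_lowering : f ^ n = 0 := by
  have hpow : ∀ k < n, (f ^ (k + 1)) (e k) = 0 := by
    intro k
    induction k with
    | zero => simpa using fun _ => hf0
    | succ k ih =>
      intro hk
      rw [pow_succ, mul_apply, hf k hk, ih (by omega)]
  refine b.ext fun i => ?_
  have hsplit : f ^ n = f ^ (n - (i + 1)) * f ^ ((i : ℕ) + 1) := by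
    rw [← pow_add, Nat.sub_add_cancel i.isLt]
  rw [hb, LinearMap.zero_apply, hsplit, mul_apply, hpow i i.isLt, map_zero]

theorem ker_le_span_singleton_of_lowering : LinearMap.ker f ≤ K ∙ e 0 := by
  intro x hx
  rw [LinearMap.mem_ker] at hx
  cases n with
  | zero =>
    rw [← b.sum_repr x, Finset.univ_eq_empty, Finset.sum_empty]
    exact Submodule.zero_mem _
  | succ m =>
    have hx_eq := b.sum_repr x
    rw [Fin.sum_univ_succ] at hx_eq
    have hfx : ∑ i : Fin m, b.repr x i.succ • b i.castSucc = 0 := by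
      conv_rhs => rw [← hx, ← hx_eq]
      rw [map_add, map_smul, hb 0, Fin.val_zero, hf0, smul_zero, zero_add, map_sum]
      refine Finset.sum_congr rfl fun i _ => ?_
      rw [map_smul, hb, hb, Fin.val_succ, hf i (by omega), Fin.val_castSucc]
    have hcoeff := Fintype.linearIndependent_iff.mp
      (b.linearIndependent.comp _ (Fin.castSucc_injective m)) _ hfx
    refine Submodule.mem_span_singleton.mpr ⟨b.repr x 0, ?_⟩
    conv_rhs => rw [← hx_eq]
    simp [hcoeff, hb]

theorem mem_of_lowering {P : Submodule K V} (hP : ∀ x ∈ P, f x ∈ P) (hP0 : P ≠ ⊥) : e 0 ∈ P := by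
  obtain ⟨x, hxP, hx0⟩ := Submodule.exists_mem_ne_zero_of_ne_bot hP0
  obtain ⟨m, hm0, hm⟩ := exists_pow_apply_ne_zero_and_apply_eq_zero hx0
    (N := n) (by rw [pow_eq_zero_of_lowering b hb hf0 hf, LinearMap.zero_apply])
  obtain ⟨c, hc⟩ := Submodule.mem_span_singleton.mp
    (ker_le_span_singleton_of_lowering b hb hf0 hf hm)
  have hc0 : c ≠ 0 := by rintro rfl; exact hm0 (by rw [← hc, zero_smul])
  rw [← inv_smul_smul₀ hc0 (e 0), hc]
  exact P.smul_mem _ (pow_apply_mem_of_forall_mem m hP x hxP)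

end Module.End

theorem Nat.choose_two_pow_sub_one_mod_two (l : ℕ) {k : ℕ} (hk : k ≤ 2 ^ l - 1) :
    (2 ^ l - 1).choose k % 2 = 1 := by
  induction l generalizing k with
  | zero => simp_all
  | succ l ih =>
    have hlucas : (2 ^ (l + 1) - 1).choose k % 2 =
        ((2 ^ (l + 1) - 1) % 2).choose (k % 2) * ((2 ^ (l + 1) - 1) / 2).choose (k / 2) % 2 :=
      @Choose.choose_modEq_choose_mod_mul_choose_div_nat _ _ _ ⟨Nat.prime_two⟩
    have hpos : 0 < 2 ^ l := Nat.two_pow_pos l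
    rw [show (2 ^ (l + 1) - 1) % 2 = 1 by omega, show (2 ^ (l + 1) - 1) / 2 = 2 ^ l - 1 by omega,
      Nat.mul_mod, ih (by omega)] at hlucas
    rcases Nat.mod_two_eq_zero_or_one k with h | h <;> simp_all

theorem Nat.choose_two_pow_sub_two_two_mod_two {l : ℕ} (hl : 2 ≤ l) :
    (2 ^ l - 2).choose 2 % 2 = 1 := by
  have h4 : 4 ≤ 2 ^ l := Nat.pow_le_pow_right two_pos hl
  have heven : 2 ∣ 2 ^ l := dvd_pow_self 2 (by omega)
  have hpascal : (2 ^ l - 1).choose 2 = (2 ^ l - 2) + (2 ^ l - 2).choose 2 := by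
    rw [show 2 ^ l - 1 = 2 ^ l - 2 + 1 by omega, Nat.choose_succ_succ', Nat.choose_one_right]
  have hodd := Nat.choose_two_pow_sub_one_mod_two l (k := 2) (by omega)
  omega

theorem CharTwo.natCast_choose_two_pow_sub_one {R : Type*} [AddMonoidWithOne R] [CharP R 2]
    (l : ℕ) {k : ℕ} (hk : k ≤ 2 ^ l - 1) : ((2 ^ l - 1).choose k : R) = 1 := by
  rw [CharTwo.natCast_eq_mod, Nat.choose_two_pow_sub_one_mod_two l hk, Nat.cast_one]

theorem LieAlgebra.coe_derivedSeries_one_le_of_forall_lie_basis_mem {ι R L : Type*} [CommRing R]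
    [LieRing L] [LieAlgebra R L] (b : Module.Basis ι R L) {S : Submodule R L}
    (h : ∀ i j, ⁅b i, b j⁆ ∈ S) : (derivedSeries R L 1 : Submodule R L) ≤ S := by
  have hB : (LieModule.toEnd R L L : L →ₗ[R] Module.End R L).compr₂ S.mkQ = 0 :=
    LinearMap.ext_basis b b fun i j => by simpa [Submodule.Quotient.mk_eq_zero] using h i j
  rw [coe_derivedSeries_one_eq, Submodule.span_le]
  rintro _ ⟨x, y, rfl⟩
  simpa [Submodule.Quotient.mk_eq_zero] using LinearMap.congr_fun₂ hB x y

section Witt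

open LieAlgebra

variable {F : Type*} [Field F] {l : ℕ} {L : Type*} [LieRing L] [LieAlgebra F L] {a : ℕ → L}
  (hbracket : ∀ i j, i ≤ 2 ^ l - 1 → j ≤ 2 ^ l - 1 →
    ⁅a i, a j⁆ = ((Nat.choose (i + j - 1) i : F) - (Nat.choose (i + j - 1) j : F)) • a (i + j - 1))
include hbracket

theorem witt_lie_zero_succ {k : ℕ} (hk : k + 1 ≤ 2 ^ l - 1) : ⁅a 0, a (k + 1)⁆ = a k := by
  rw [hbracket 0 (k + 1) (Nat.zero_le _) hk, zero_add, Nat.add_sub_cancel, Nat.choose_zero_right,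
    Nat.choose_succ_self, Nat.cast_one, Nat.cast_zero, sub_zero, one_smul]

theorem witt_mem_derivedSeries_one {k : ℕ} (hk : k < 2 ^ l - 1) : a k ∈ derivedSeries F L 1 := by
  change a k ∈ (derivedSeries F L 1 : Submodule F L)
  rw [coe_derivedSeries_one_eq]
  exact Submodule.subset_span ⟨a 0, a (k + 1), witt_lie_zero_succ hbracket (by omega)⟩

theorem witt_not_isLieAbelian_derivedSeries_one (hl : 2 ≤ l) (ha1 : a 1 ≠ 0) :
    ¬IsLieAbelian (derivedSeries F L 1) := by
  have h4 : 4 ≤ 2 ^ l := Nat.pow_le_pow_right two_pos hl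
  intro habel
  have h := congrArg Subtype.val <| trivial_lie_zero (derivedSeries F L 1) (derivedSeries F L 1)
    ⟨a 0, witt_mem_derivedSeries_one hbracket (by omega)⟩
    ⟨a 2, witt_mem_derivedSeries_one hbracket (by omega)⟩
  exact ha1 (by simpa [witt_lie_zero_succ hbracket (k := 1) (by omega)] using h)

variable [CharP F 2]

theorem witt_lie_eq_zero_of_add_eq {i j : ℕ} (hi : i ≤ 2 ^ l - 1) (hj : j ≤ 2 ^ l - 1)
    (hij : i + j = 2 ^ l) : ⁅a i, a j⁆ = 0 := by
  rw [hbracket i j hi hj, show i + j - 1 = 2 ^ l - 1 by omega,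
    CharTwo.natCast_choose_two_pow_sub_one l hi, CharTwo.natCast_choose_two_pow_sub_one l hj,
    sub_self, zero_smul]

theorem witt_lie_two_sub_three (hl : 2 ≤ l) : ⁅a 2, a (2 ^ l - 3)⁆ = a (2 ^ l - 2) := by
  have h4 : 4 ≤ 2 ^ l := Nat.pow_le_pow_right two_pos hl
  have heven : 2 ∣ 2 ^ l := dvd_pow_self 2 (by omega)
  have hsymm : (2 ^ l - 2).choose (2 ^ l - 3) = 2 ^ l - 2 := by
    rw [show 2 ^ l - 3 = 2 ^ l - 2 - 1 by omega, Nat.choose_symm (by omega), Nat.choose_one_right]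
  rw [hbracket 2 (2 ^ l - 3) (by omega) (by omega), show 2 + (2 ^ l - 3) - 1 = 2 ^ l - 2 by omega,
    hsymm, CharTwo.natCast_eq_mod, Nat.choose_two_pow_sub_two_two_mod_two hl, Nat.cast_one,
    CharTwo.natCast_eq_mod, show (2 ^ l - 2) % 2 = 0 by omega, Nat.cast_zero, sub_zero, one_smul]

variable (ha0 : ∀ k, 2 ^ l - 1 < k → a k = 0)
include ha0

theorem witt_lie_mem_span {i j : ℕ} (hi : i ≤ 2 ^ l - 1) (hj : j ≤ 2 ^ l - 1) :
    ⁅a i, a j⁆ ∈ Submodule.span F (Set.range fun k : Fin (2 ^ l - 1) => a k) := by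
  by_cases hlt : i + j - 1 < 2 ^ l - 1
  · rw [hbracket i j hi hj]
    exact Submodule.smul_mem _ _ (Submodule.subset_span ⟨⟨i + j - 1, hlt⟩, rfl⟩)
  by_cases hgt : 2 ^ l - 1 < i + j - 1
  · rw [hbracket i j hi hj, ha0 _ hgt, smul_zero]
    exact Submodule.zero_mem _
  have hpos := Nat.one_le_two_pow (n := l)
  obtain ⟨rfl, rfl⟩ | htop : (i = 0 ∧ j = 0) ∨ i + j = 2 ^ l := by omega
  · rw [lie_self]
    exact Submodule.zero_mem _
  · rw [witt_lie_eq_zero_of_add_eq hbracket hi hj htop]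
    exact Submodule.zero_mem _

variable (b : Module.Basis (Fin (2 ^ l)) F L) (hb : ∀ i : Fin (2 ^ l), b i = a i)
include b hb

theorem witt_coe_derivedSeries_one_eq_span :
    (derivedSeries F L 1 : Submodule F L) =
      Submodule.span F (Set.range fun k : Fin (2 ^ l - 1) => a k) := by
  refine le_antisymm (coe_derivedSeries_one_le_of_forall_lie_basis_mem b fun i j => ?_) ?_
  · rw [hb, hb]
    exact witt_lie_mem_span hbracket ha0 (by omega) (by omega)
  · rw [Submodule.span_le]
    rintro _ ⟨k, rfl⟩
    exact witt_mem_derivedSeries_one hbracket k.isLt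

theorem witt_finrank_derivedSeries_one : Module.finrank F (derivedSeries F L 1) = 2 ^ l - 1 := by
  have hli : LinearIndependent F (fun k : Fin (2 ^ l - 1) => a k) := by
    simpa [Function.comp_def, hb] using
      b.linearIndependent.comp _ (Fin.castLE_injective (Nat.sub_le (2 ^ l) 1))
  calc Module.finrank F (derivedSeries F L 1)
      _ = Module.finrank F (Submodule.span F (Set.range fun k : Fin (2 ^ l - 1) => a k)) :=
        (LinearEquiv.ofEq _ _ (witt_coe_derivedSeries_one_eq_span hbracket ha0 b hb)).finrank_eq
      _ = 2 ^ l - 1 := by rw [finrank_span_eq_card hli, Fintype.card_fin]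

theorem witt_coe_derivedSeries_one_le (hl : 2 ≤ l) {P : Submodule F L}
    (hP : ∀ w ∈ derivedSeries F L 1, ∀ x ∈ P, ⁅w, x⁆ ∈ P) (hP0 : P ≠ ⊥) :
    (derivedSeries F L 1 : Submodule F L) ≤ P := by
  have h4 : 4 ≤ 2 ^ l := Nat.pow_le_pow_right two_pos hl
  have hmem : ∀ k < 2 ^ l - 1, a k ∈ derivedSeries F L 1 :=
    fun k hk => witt_mem_derivedSeries_one hbracket hk
  have ha0P : a 0 ∈ P := Module.End.mem_of_lowering b hb (f := ad F L (a 0)) (lie_self _)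
    (fun k hk => witt_lie_zero_succ hbracket (by omega)) (hP _ (hmem 0 (by omega))) hP0
  have hlow : ∀ k ≤ 2 ^ l - 3, a k ∈ P := fun k hk => by
    rw [← witt_lie_zero_succ hbracket (k := k) (by omega), ← lie_skew]
    exact P.neg_mem (hP _ (hmem (k + 1) (by omega)) _ ha0P)
  have htop : a (2 ^ l - 2) ∈ P := by
    rw [← witt_lie_two_sub_three hbracket hl]
    exact hP _ (hmem 2 (by omega)) _ (hlow _ le_rfl)
  rw [witt_coe_derivedSeries_one_eq_span hbracket ha0 b hb, Submodule.span_le]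
  rintro _ ⟨k, rfl⟩
  rcases (by omega : (k : ℕ) ≤ 2 ^ l - 3 ∨ (k : ℕ) = 2 ^ l - 2) with hk | hk
  · exact hlow k hk
  · exact (show a k ∈ P by rw [hk]; exact htop)

theorem witt_eq_top_of_ne_bot (hl : 2 ≤ l) {J : LieIdeal F (derivedSeries F L 1)} (hJ : J ≠ ⊥) :
    J = ⊤ := by
  let P : Submodule F L := J.toSubmodule.map (derivedSeries F L 1).incl.toLinearMap
  have hP : ∀ w ∈ derivedSeries F L 1, ∀ x ∈ P, ⁅w, x⁆ ∈ P := by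
    rintro w hw _ ⟨y, hy, rfl⟩
    exact ⟨⁅⟨w, hw⟩, y⁆, J.lie_mem hy, rfl⟩
  have hP0 : P ≠ ⊥ := by
    rw [Ne, ← Submodule.map_bot (derivedSeries F L 1).incl.toLinearMap,
      (Submodule.map_injective_of_injective Subtype.val_injective).eq_iff,
      LieSubmodule.toSubmodule_eq_bot]
    exact hJ
  have hDP := witt_coe_derivedSeries_one_le hbracket ha0 b hb hl hP hP0
  rw [eq_top_iff]
  intro y _
  obtain ⟨y', hy', hyy⟩ := hDP y.2
  rwa [← Subtype.ext hyy]

end Witt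

/-- For the Witt algebra `W = W(1,(l))` over a field of characteristic 2
with `l ≥ 2`, the derived subalgebra `W' = [W,W]` is a simple Lie algebra of
dimension `2^l - 1`. -/
theorem witt_derived_simple
    (F : Type*) [Field F] [CharP F 2] (l : ℕ) (hl : 2 ≤ l)
    (L : Type*) [LieRing L] [LieAlgebra F L]
    (a : ℕ → L) (b : Module.Basis (Fin (2 ^ l)) F L)
    (hb : ∀ i : Fin (2 ^ l), b i = a i)
    (ha0 : ∀ k, 2 ^ l - 1 < k → a k = 0)
    (hbracket : ∀ i j, i ≤ 2 ^ l - 1 → j ≤ 2 ^ l - 1 →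
      ⁅a i, a j⁆ =
        ((Nat.choose (i + j - 1) i : F) - (Nat.choose (i + j - 1) j : F)) • a (i + j - 1)) :
    LieAlgebra.IsSimple F (LieAlgebra.derivedSeries F L 1) ∧
      Module.finrank F (LieAlgebra.derivedSeries F L 1) = 2 ^ l - 1 := by
  have h4 : 4 ≤ 2 ^ l := Nat.pow_le_pow_right two_pos hl
  have ha1 : a 1 ≠ 0 := hb ⟨1, by omega⟩ ▸ b.ne_zero _
  refine ⟨⟨fun J => ?_, witt_not_isLieAbelian_derivedSeries_one hbracket hl ha1⟩,
    witt_finrank_derivedSeries_one hbracket ha0 b hb⟩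
  exact or_iff_not_imp_left.mpr (witt_eq_top_of_ne_bot hbracket ha0 b hb hl)
end

section
/- In the Witt algebra derived subalgebra W' = W(1,(l))' over a field of characteristic 2 with l ≥ 2: if x = Σ_{i=0}^{2^l-1} λ_i a_i is a nonzero element and k is maximal with λ_k ≠ 0, then (ad a_0)^k(x) = λ_k a_0. Consequently every nonzero ideal of W' contains a_0. -/
/-!
`ad a₀` lowers the basis, `a (i + 1) ↦ a i`, and kills `a₀`; hence `(ad a₀)^k` sends `a i`
to `a (i - k)` for `i ≥ k` and to `0` for `i < k`. Applied to `x = Σ λᵢ aᵢ` with top index `k`,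
only `λ_k a_k` survives, giving `λ_k a₀`. Since `a₀ = ⁅a₀, a₁⁆` lies in `W'` and ideals of `W'`
are stable under `ad a₀`, rescaling gives `a₀` in every nonzero ideal.
-/

open Finset

section Lowering

variable {R M : Type*} [Semiring R] [AddCommMonoid M] [Module R M]
  (f : Module.End R M) (a : ℕ → M) {N : ℕ}
  (h0 : f (a 0) = 0) (hsucc : ∀ i, i + 1 < N → f (a (i + 1)) = a i)
include hsucc

theorem Module.End.pow_apply_of_lowering_of_le {k i : ℕ} (hki : k ≤ i) (hi : i < N) :
    (f ^ k) (a i) = a (i - k) := by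
  induction k generalizing i with
  | zero => simp
  | succ k ih =>
    obtain ⟨j, rfl⟩ : ∃ j, i = j + 1 := ⟨i - 1, by omega⟩
    rw [pow_succ, Module.End.mul_apply, hsucc j hi, ih (by omega) (by omega)]
    congr 1
    omega

include h0

theorem Module.End.pow_apply_of_lowering_of_lt {k i : ℕ} (hik : i < k) (hi : i < N) :
    (f ^ k) (a i) = 0 := by
  obtain ⟨m, rfl⟩ : ∃ m, k = m + 1 + i := ⟨k - i - 1, by omega⟩
  rw [pow_add, pow_succ, Module.End.mul_apply, Module.End.mul_apply,
    f.pow_apply_of_lowering_of_le a hsucc le_rfl hi, Nat.sub_self, h0, map_zero]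

theorem Module.End.pow_apply_sum_of_lowering (lam : ℕ → R) {k : ℕ} (hk : k < N)
    (htop : ∀ i, k < i → i < N → lam i = 0) :
    (f ^ k) (∑ i ∈ range N, lam i • a i) = lam k • a 0 := by
  rw [map_sum, sum_eq_single_of_mem k (mem_range.mpr hk)]
  · rw [map_smul, f.pow_apply_of_lowering_of_le a hsucc le_rfl hk, Nat.sub_self]
  · intro i hi hik
    rw [mem_range] at hi
    rcases hik.lt_or_gt with hlt | hgt
    · rw [map_smul, f.pow_apply_of_lowering_of_lt a h0 hsucc hlt hi, smul_zero]
    · rw [htop i hgt hi, zero_smul, map_zero]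

end Lowering

theorem exists_top_coeff_of_sum_ne_zero {R M : Type*} [Semiring R] [AddCommMonoid M]
    [Module R M] {a : ℕ → M} {lam : ℕ → R} {N : ℕ}
    (h : ∑ i ∈ range N, lam i • a i ≠ 0) :
    ∃ k < N, lam k ≠ 0 ∧ ∀ i, k < i → i < N → lam i = 0 := by
  classical
  obtain ⟨j, hj, hlamj⟩ : ∃ j < N, lam j ≠ 0 := by
    contrapose! h
    exact sum_eq_zero fun i hi => by rw [h i (mem_range.mp hi), zero_smul]
  set k := Nat.findGreatest (lam · ≠ 0) (N - 1)
  have hkN : k ≤ N - 1 := Nat.findGreatest_le (N - 1)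
  refine ⟨k, by omega, Nat.findGreatest_spec (P := (lam · ≠ 0)) (by omega : j ≤ N - 1) hlamj,
    fun i hki hi => ?_⟩
  by_contra hne
  exact Nat.findGreatest_is_greatest hki (by omega) hne

theorem Module.Basis.exists_eq_sum_range {R M : Type*} [CommSemiring R] [AddCommMonoid M]
    [Module R M] {N : ℕ} (b : Module.Basis (Fin N) R M) {a : ℕ → M}
    (hb : ∀ i : Fin N, b i = a i) (y : M) :
    ∃ lam : ℕ → R, y = ∑ i ∈ range N, lam i • a i := by
  refine ⟨fun i => if h : i < N then b.repr y ⟨i, h⟩ else 0, ?_⟩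
  rw [← Fin.sum_univ_eq_sum_range (fun i => (if h : i < N then b.repr y ⟨i, h⟩ else 0) • a i)]
  conv_lhs => rw [← b.sum_repr y]
  simp [hb]

theorem LieAlgebra.lie_mem_derivedSeries_one {R L : Type*} [CommRing R] [LieRing L]
    [LieAlgebra R L] (x y : L) :
    ⁅x, y⁆ ∈ derivedSeries R L 1 := by
  rw [derivedSeries_def, derivedSeriesOfIdeal_succ, derivedSeriesOfIdeal_zero]
  exact LieSubmodule.lie_mem_lie (LieSubmodule.mem_top x) (LieSubmodule.mem_top y)

theorem LieIdeal.mem_of_ad_pow_apply_eq_smul {R L : Type*} [Field R] [LieRing L]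
    [LieAlgebra R L] {K : LieIdeal R L}
    (I : LieIdeal R K) {y z : K} (hy : y ∈ I) {k : ℕ} {c : R} (hc : c ≠ 0)
    (h : (LieAlgebra.ad R L z ^ k) y = c • (z : L)) : z ∈ I := by
  have hmem : (LieAlgebra.ad R K z ^ k) y ∈ I :=
    Module.End.pow_apply_mem_of_forall_mem (p := I.toSubmodule) k (fun _ hx => I.lie_mem hx)
      y hy
  have hz : (LieAlgebra.ad R K z ^ k) y = c • z :=
    Subtype.ext ((LieSubalgebra.coe_ad_pow R L K.toLieSubalgebra z y k).trans h)
  rw [hz] at hmem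
  simpa [hc] using I.smul_mem c⁻¹ hmem

theorem witt_derived_ideal_contains_a0_general
    (F : Type*) [Field F] (l : ℕ) (hl : 2 ≤ l)
    (L : Type*) [LieRing L] [LieAlgebra F L]
    (a : ℕ → L) (b : Module.Basis (Fin (2 ^ l)) F L)
    (hb : ∀ i : Fin (2 ^ l), b i = a i)
    (hbracket : ∀ i j, i ≤ 2 ^ l - 1 → j ≤ 2 ^ l - 1 →
      ⁅a i, a j⁆ =
        ((Nat.choose (i + j - 1) i : F) - (Nat.choose (i + j - 1) j : F)) • a (i + j - 1)) :
    (∀ (lam : ℕ → F) (x : L) (k : ℕ),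
        x = ∑ i ∈ Finset.range (2 ^ l), lam i • a i → x ≠ 0 →
        k ≤ 2 ^ l - 1 → lam k ≠ 0 → (∀ i, k < i → i ≤ 2 ^ l - 1 → lam i = 0) →
        ((LieAlgebra.ad F L (a 0)) ^ k) x = lam k • a 0) ∧
      (∀ I : LieIdeal F (LieAlgebra.derivedSeries F L 1), I ≠ ⊥ →
        ∃ h : a 0 ∈ LieAlgebra.derivedSeries F L 1,
          (⟨a 0, h⟩ : LieAlgebra.derivedSeries F L 1) ∈ I) := by
  have hN : 4 ≤ 2 ^ l := Nat.pow_le_pow_right two_pos hl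
  have hlower : ∀ i, i + 1 < 2 ^ l → LieAlgebra.ad F L (a 0) (a (i + 1)) = a i := by
    intro i hi
    rw [LieAlgebra.ad_apply, hbracket 0 (i + 1) (by omega) (by omega)]
    simp
  have part1 : ∀ (lam : ℕ → F) (x : L) (k : ℕ),
      x = ∑ i ∈ range (2 ^ l), lam i • a i → x ≠ 0 →
      k ≤ 2 ^ l - 1 → lam k ≠ 0 → (∀ i, k < i → i ≤ 2 ^ l - 1 → lam i = 0) →
      ((LieAlgebra.ad F L (a 0)) ^ k) x = lam k • a 0 := by
    rintro lam x k rfl - hk - htop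
    exact (LieAlgebra.ad F L (a 0)).pow_apply_sum_of_lowering a (lie_self _) hlower lam
      (by omega) fun i hki hi => htop i hki (by omega)
  refine ⟨part1, fun I hI => ?_⟩
  have ha0 : a 0 ∈ LieAlgebra.derivedSeries F L 1 :=
    hlower 0 (by omega) ▸ LieAlgebra.lie_mem_derivedSeries_one _ _
  refine ⟨ha0, ?_⟩
  have : Nontrivial I := (LieSubmodule.nontrivial_iff_ne_bot _ _ _).mpr hI
  obtain ⟨⟨y, hyI⟩, hy0⟩ := exists_ne (0 : I)
  have hy : (y : L) ≠ 0 := fun h => hy0 (Subtype.ext (Subtype.ext h))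
  obtain ⟨lam, hlam⟩ := b.exists_eq_sum_range hb y
  obtain ⟨k, hk, hlamk, htop⟩ := exists_top_coeff_of_sum_ne_zero (hlam ▸ hy)
  exact LieIdeal.mem_of_ad_pow_apply_eq_smul I hyI hlamk
    (part1 lam y k hlam hy (by omega) hlamk fun i hki hi => htop i hki (by omega))

/-- In `W' = W(1,(l))'` over a field of characteristic 2 (`l ≥ 2`):
if `x = Σ_{i=0}^{2^l-1} λᵢ aᵢ` is nonzero and `k` is maximal with `λ_k ≠ 0`, then
`(ad a₀)^k (x) = λ_k a₀`; consequently every nonzero ideal of `W'` contains `a₀`. -/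
theorem witt_derived_ideal_contains_a0
    (F : Type*) [Field F] [CharP F 2] (l : ℕ) (hl : 2 ≤ l)
    (L : Type*) [LieRing L] [LieAlgebra F L]
    (a : ℕ → L) (b : Module.Basis (Fin (2 ^ l)) F L)
    (hb : ∀ i : Fin (2 ^ l), b i = a i)
    (ha0 : ∀ k, 2 ^ l - 1 < k → a k = 0)
    (hbracket : ∀ i j, i ≤ 2 ^ l - 1 → j ≤ 2 ^ l - 1 →
      ⁅a i, a j⁆ =
        ((Nat.choose (i + j - 1) i : F) - (Nat.choose (i + j - 1) j : F)) • a (i + j - 1)) :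
    (∀ (lam : ℕ → F) (x : L) (k : ℕ),
        x = ∑ i ∈ Finset.range (2 ^ l), lam i • a i → x ≠ 0 →
        k ≤ 2 ^ l - 1 → lam k ≠ 0 → (∀ i, k < i → i ≤ 2 ^ l - 1 → lam i = 0) →
        ((LieAlgebra.ad F L (a 0)) ^ k) x = lam k • a 0) ∧
      (∀ I : LieIdeal F (LieAlgebra.derivedSeries F L 1), I ≠ ⊥ →
        ∃ h : a 0 ∈ LieAlgebra.derivedSeries F L 1,
          (⟨a 0, h⟩ : LieAlgebra.derivedSeries F L 1) ∈ I) :=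
  witt_derived_ideal_contains_a0_general F l hl L a b hb hbracket
end

section
/- In the special algebra S = S(2,(m_1,m_2)) over a field of characteristic 2, the brackets [z_{ij}, z_{kl}] = γ_{ijkl} z_{i+k, j+l} hold, where γ_{ijkl} = C(i+k+1, i+1)(C(j+l, j) + C(j+l, j-1)) - C(i+k+1, i)(C(j+l, j+1) + C(j+l, j)) evaluated mod 2. -/
/- Concrete model of the Witt algebra `W(2,m)` in characteristic 2: elements are
pairs `(f₁, f₂)` representing `f₁D₁ + f₂D₂`, with the Witt bracket
`[fDᵢ, gDⱼ] = fDᵢ(g)Dⱼ - gDⱼ(f)Dᵢ`. -/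

/-- divided power multiplication on `A(2)` -/
def dpMul {F : Type*} [Field F] (f g : ℕ × ℕ → F) : ℕ × ℕ → F := fun k =>
  ∑ i1 ∈ Finset.range (k.1 + 1), ∑ i2 ∈ Finset.range (k.2 + 1),
    (Nat.choose k.1 i1 : F) * (Nat.choose k.2 i2 : F) * f (i1, i2) * g (k.1 - i1, k.2 - i2)

/-- partial derivation `D₁` -/
def dpD1 {F : Type*} [Field F] (f : ℕ × ℕ → F) : ℕ × ℕ → F := fun p => f (p.1 + 1, p.2)

/-- partial derivation `D₂` -/
def dpD2 {F : Type*} [Field F] (f : ℕ × ℕ → F) : ℕ × ℕ → F := fun p => f (p.1, p.2 + 1)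

/-- the Witt bracket on `W(2,m) = {f₁D₁ + f₂D₂}` -/
def wittBr {F : Type*} [Field F] (f g : (ℕ × ℕ → F) × (ℕ × ℕ → F)) :
    (ℕ × ℕ → F) × (ℕ × ℕ → F) :=
  (dpMul f.1 (dpD1 g.1) + dpMul f.2 (dpD2 g.1) - dpMul g.1 (dpD1 f.1) - dpMul g.2 (dpD2 f.1),
   dpMul f.1 (dpD1 g.2) + dpMul f.2 (dpD2 g.2) - dpMul g.1 (dpD1 f.2) - dpMul g.2 (dpD2 f.2))

/-- `z_{ij} = X^{(i+1,j)}D₁ - X^{(i,j+1)}D₂` -/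
def sZ {F : Type*} [Field F] (i j : ℕ) : (ℕ × ℕ → F) × (ℕ × ℕ → F) :=
  (Pi.single (i + 1, j) 1, -Pi.single (i, j + 1) 1)

/-- `z_{ij}` extended by zero outside the index range of `S(2,(m₁,m₂))` -/
def sZext {F : Type*} [Field F] (m1 m2 i j : ℕ) : (ℕ × ℕ → F) × (ℕ × ℕ → F) :=
  if i ≤ 2 ^ m1 - 2 ∧ j ≤ 2 ^ m2 - 2 then sZ i j else 0

/-- `γ_{ijkl} = C(i+k+1,i+1)(C(j+l,j) + C(j+l,j-1)) - C(i+k+1,i)(C(j+l,j+1) + C(j+l,j))`,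
with the convention `C(n,-1) = 0`. -/
def sGamma {F : Type*} [Field F] (i j k l : ℕ) : F :=
  (Nat.choose (i + k + 1) (i + 1) : F) *
      ((Nat.choose (j + l) j : F) +
        (if j = 0 then 0 else (Nat.choose (j + l) (j - 1) : F))) -
    (Nat.choose (i + k + 1) i : F) *
      ((Nat.choose (j + l) (j + 1) : F) + (Nat.choose (j + l) j : F))

/-! Divided-power monomials multiply by `X^(a) X^(b) = C(a₁+b₁, a₁) C(a₂+b₂, a₂) X^(a+b)`, so each
component of `[z_{ij}, z_{kl}]` is a single monomial; binomial symmetry and Pascal's rule turn its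
coefficient into `±γ_{ijkl} = ±(C(i+k+1, i+1) C(j+l+1, j) - C(i+k+1, i) C(j+l+1, j+1))`. When
`i + k` or `j + l` leaves the index range, the binomials `C(i+k+1, ·)` resp. `C(j+l+1, ·)` are even:
adding two numbers below `2^m` whose sum reaches `2^m` carries in base 2. -/

open Finset

theorem Nat.Prime.dvd_choose_of_lt_pow {p m a n : ℕ} (hp : p.Prime) (ha : a < p ^ m)
    (hna : n - a < p ^ m) (hn : p ^ m ≤ n) : p ∣ n.choose a := by
  have := Fact.mk hp
  have hm : m ≠ 0 := by rintro rfl; rw [pow_zero] at *; omega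
  -- by Kummer's theorem, the carry out of digit position `m` contributes to the valuation
  have hcarry : m ∈ {i ∈ Ico 1 (Nat.log p n + 1) | p ^ i ≤ a % p ^ i + (n - a) % p ^ i} := by
    rw [mem_filter, mem_Ico, Nat.mod_eq_of_lt ha, Nat.mod_eq_of_lt hna]
    exact ⟨⟨Nat.one_le_iff_ne_zero.mpr hm, Nat.lt_succ_of_le (Nat.le_log_of_pow_le hp.one_lt hn)⟩,
      by omega⟩
  apply dvd_of_one_le_padicValNat
  rw [padicValNat_choose (by omega) (Nat.lt_succ_self _)]
  exact Finset.card_pos.mpr ⟨m, hcarry⟩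

theorem cast_choose_eq_zero_of_lt_pow {R : Type*} [AddMonoidWithOne R] {p : ℕ} [CharP R p]
    (hp : p.Prime) {m a n : ℕ} (ha : a < p ^ m) (hna : n - a < p ^ m) (hn : p ^ m ≤ n) :
    (n.choose a : R) = 0 :=
  (CharP.cast_eq_zero_iff R p _).mpr (hp.dvd_choose_of_lt_pow ha hna hn)

theorem Nat.choose_add_add_one_left (j l : ℕ) :
    (j + l + 1).choose j = (j + l).choose j + (j + l).choose (l + 1) := by
  rw [Nat.choose_symm_of_eq_add (add_assoc j l 1), Nat.choose_succ_succ', ← Nat.choose_symm_add]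

theorem cast_choose_bracket_identity {R : Type*} [CommRing R] (i j k l : ℕ) :
    ((i + k + 1).choose (i + 1) * (j + l).choose j - (i + k + 1).choose i * (j + l).choose (j + 1)
      - (i + k + 1).choose (k + 1) * (j + l).choose l + (i + k + 1).choose k * (j + l).choose (l + 1)
        : R) =
      (i + k + 1).choose (i + 1) * (j + l + 1).choose j
        - (i + k + 1).choose i * (j + l + 1).choose (j + 1) := by
  rw [Nat.choose_symm_of_eq_add (show i + k + 1 = (k + 1) + i by ring),
    Nat.choose_symm_of_eq_add (show i + k + 1 = k + (i + 1) by ring),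
    Nat.choose_symm_of_eq_add (show j + l = l + j by ring), Nat.choose_add_add_one_left j l,
    Nat.choose_succ_succ' (j + l) j]
  push_cast
  ring

section

variable {F : Type*} [Field F]

theorem dpMul_zero (f : ℕ × ℕ → F) : dpMul f 0 = 0 := by
  funext p; simp [dpMul]

theorem dpMul_single_single (a₁ a₂ b₁ b₂ : ℕ) (c d : F) :
    dpMul (Pi.single (a₁, a₂) c) (Pi.single (b₁, b₂) d) =
      Pi.single (a₁ + b₁, a₂ + b₂) ((a₁ + b₁).choose a₁ * (a₂ + b₂).choose a₂ * c * d) := by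
  funext ⟨p₁, p₂⟩
  simp only [dpMul]
  by_cases hp : a₁ ≤ p₁ ∧ a₂ ≤ p₂
  · rw [sum_eq_single_of_mem a₁ (by simp; omega), sum_eq_single_of_mem a₂ (by simp; omega)]
    · by_cases hq : p₁ = a₁ + b₁ ∧ p₂ = a₂ + b₂
      · obtain ⟨rfl, rfl⟩ := hq
        simp
      · have h₁ : (p₁ - a₁, p₂ - a₂) ≠ (b₁, b₂) := by rw [Ne, Prod.mk.injEq]; omega
        have h₂ : (p₁, p₂) ≠ (a₁ + b₁, a₂ + b₂) := by rw [Ne, Prod.mk.injEq]; omega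
        rw [Pi.single_eq_of_ne h₁, Pi.single_eq_of_ne h₂, mul_zero]
    · intro i₂ _ h
      simp [h]
    · intro i₁ _ h
      refine sum_eq_zero fun i₂ _ => ?_
      simp [h]
  · rw [Pi.single_eq_of_ne (by rw [Ne, Prod.mk.injEq]; omega)]
    refine sum_eq_zero fun i₁ h₁ => sum_eq_zero fun i₂ h₂ => ?_
    rw [mem_range] at h₁ h₂
    rw [Pi.single_eq_of_ne (by rw [Ne, Prod.mk.injEq]; omega), mul_zero, zero_mul]

theorem dpD1_single_succ (b₁ b₂ : ℕ) (d : F) :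
    dpD1 (Pi.single (b₁ + 1, b₂) d) = Pi.single (b₁, b₂) d := by
  funext ⟨p₁, p₂⟩; simp [dpD1, Pi.single_apply]

theorem dpD1_single_zero (b₂ : ℕ) (d : F) : dpD1 (Pi.single (0, b₂) d) = 0 := by
  funext ⟨p₁, p₂⟩; simp [dpD1]

theorem dpD2_single_succ (b₁ b₂ : ℕ) (d : F) :
    dpD2 (Pi.single (b₁, b₂ + 1) d) = Pi.single (b₁, b₂) d := by
  funext ⟨p₁, p₂⟩; simp [dpD2, Pi.single_apply]

theorem dpD2_single_zero (b₁ : ℕ) (d : F) : dpD2 (Pi.single (b₁, 0) d) = 0 := by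
  funext ⟨p₁, p₂⟩; simp [dpD2]

theorem dpMul_single_dpD1_single (a₁ a₂ b₁ b₂ : ℕ) (c d : F) :
    dpMul (Pi.single (a₁ + 1, a₂) c) (dpD1 (Pi.single (b₁, b₂) d)) =
      Pi.single (a₁ + b₁, a₂ + b₂) ((a₁ + b₁).choose (a₁ + 1) * (a₂ + b₂).choose a₂ * c * d) := by
  cases b₁ with
  | zero => simp [dpD1_single_zero, dpMul_zero]
  | succ b₁ =>
    rw [dpD1_single_succ, dpMul_single_single, show a₁ + 1 + b₁ = a₁ + (b₁ + 1) by ring]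

theorem dpMul_single_dpD2_single (a₁ a₂ b₁ b₂ : ℕ) (c d : F) :
    dpMul (Pi.single (a₁, a₂ + 1) c) (dpD2 (Pi.single (b₁, b₂) d)) =
      Pi.single (a₁ + b₁, a₂ + b₂) ((a₁ + b₁).choose a₁ * (a₂ + b₂).choose (a₂ + 1) * c * d) := by
  cases b₂ with
  | zero => simp [dpD2_single_zero, dpMul_zero]
  | succ b₂ =>
    rw [dpD2_single_succ, dpMul_single_single, show a₂ + 1 + b₂ = a₂ + (b₂ + 1) by ring]

theorem sZ_eq_single (i j : ℕ) :
    sZ (F := F) i j = (Pi.single (i + 1, j) 1, Pi.single (i, j + 1) (-1)) := by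
  rw [sZ, Pi.single_neg]

theorem sGamma_eq (i j k l : ℕ) :
    sGamma (F := F) i j k l = (i + k + 1).choose (i + 1) * (j + l + 1).choose j
      - (i + k + 1).choose i * (j + l + 1).choose (j + 1) := by
  have hpred : (if j = 0 then 0 else ((j + l).choose (j - 1) : F)) = (j + l).choose (l + 1) := by
    rcases j with _ | j
    · simp [Nat.choose_succ_self]
    · rw [if_neg j.succ_ne_zero, Nat.add_sub_cancel,
        Nat.choose_symm_of_eq_add (show j + 1 + l = j + (l + 1) by ring)]
  rw [sGamma, hpred, Nat.choose_add_add_one_left j l, Nat.choose_succ_succ' (j + l) j]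
  push_cast
  ring

theorem wittBr_sZ_fst (i j k l : ℕ) :
    (wittBr (sZ (F := F) i j) (sZ k l)).1 = Pi.single (i + k + 1, j + l) (sGamma i j k l) := by
  simp only [wittBr, sZ_eq_single, dpMul_single_dpD1_single, dpMul_single_dpD2_single]
  rw [show i + (k + 1) = i + k + 1 by ring, show k + (i + 1) = i + k + 1 by ring, add_comm l j,
    ← Pi.single_add, ← Pi.single_sub, ← Pi.single_sub, sGamma_eq]
  congr 1
  linear_combination cast_choose_bracket_identity (R := F) i j k l

theorem wittBr_sZ_snd (i j k l : ℕ) :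
    (wittBr (sZ (F := F) i j) (sZ k l)).2 = Pi.single (i + k, j + l + 1) (-sGamma i j k l) := by
  simp only [wittBr, sZ_eq_single, dpMul_single_dpD1_single, dpMul_single_dpD2_single]
  rw [add_comm k i, show l + (j + 1) = j + l + 1 by ring, show j + (l + 1) = j + l + 1 by ring,
    ← Pi.single_add, ← Pi.single_sub, ← Pi.single_sub, sGamma_eq]
  congr 1
  linear_combination cast_choose_bracket_identity (R := F) j i l k

theorem wittBr_sZ (i j k l : ℕ) :
    wittBr (sZ (F := F) i j) (sZ k l) = sGamma (F := F) i j k l • sZ (i + k) (j + l) := by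
  rw [Prod.ext_iff, wittBr_sZ_fst, wittBr_sZ_snd, sZ_eq_single, Prod.smul_fst, Prod.smul_snd,
    ← Pi.single_smul, ← Pi.single_smul, smul_eq_mul, smul_eq_mul, mul_one, mul_neg_one]
  exact ⟨rfl, rfl⟩

variable [CharP F 2] {m : ℕ} {i j k l : ℕ}

theorem sGamma_eq_zero_of_two_pow_le_left (hi : i + 1 < 2 ^ m) (hk : k + 1 < 2 ^ m)
    (h : 2 ^ m ≤ i + k + 1) : sGamma (F := F) i j k l = 0 := by
  rw [sGamma_eq, cast_choose_eq_zero_of_lt_pow Nat.prime_two hi (by omega) h,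
    cast_choose_eq_zero_of_lt_pow Nat.prime_two (by omega) (by omega) h]
  ring

theorem sGamma_eq_zero_of_two_pow_le_right (hj : j + 1 < 2 ^ m) (hl : l + 1 < 2 ^ m)
    (h : 2 ^ m ≤ j + l + 1) : sGamma (F := F) i j k l = 0 := by
  rw [sGamma_eq, cast_choose_eq_zero_of_lt_pow Nat.prime_two (by omega) (by omega) h,
    cast_choose_eq_zero_of_lt_pow Nat.prime_two hj (by omega) h]
  ring

end

theorem special_bracket_zz_general
    (F : Type*) [Field F] [CharP F 2] (m1 m2 : ℕ) :
    ∀ i j k l, i ≤ 2 ^ m1 - 2 → k ≤ 2 ^ m1 - 2 → j ≤ 2 ^ m2 - 2 → l ≤ 2 ^ m2 - 2 →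
      wittBr (sZ (F := F) i j) (sZ k l) = sGamma (F := F) i j k l • sZext (F := F) m1 m2 (i + k) (j + l) := by
  intro i j k l hi hk hj hl
  rw [wittBr_sZ, sZext]
  split_ifs with h
  · rfl
  · have hγ : sGamma (F := F) i j k l = 0 := by
      rcases not_and_or.mp h with h | h
      · exact sGamma_eq_zero_of_two_pow_le_left (m := m1) (by omega) (by omega) (by omega)
      · exact sGamma_eq_zero_of_two_pow_le_right (m := m2) (by omega) (by omega) (by omega)
    rw [hγ, zero_smul, smul_zero]

/-- In the special algebra `S = S(2,(m₁,m₂))` over a field of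
characteristic 2, `[z_{ij}, z_{kl}] = γ_{ijkl} z_{i+k, j+l}` (with `z` zero for
indices outside the range). -/
theorem special_bracket_zz
    (F : Type*) [Field F] [CharP F 2] (m1 m2 : ℕ) (hm1 : 1 ≤ m1) (hm2 : 1 ≤ m2) :
    ∀ i j k l, i ≤ 2 ^ m1 - 2 → k ≤ 2 ^ m1 - 2 → j ≤ 2 ^ m2 - 2 → l ≤ 2 ^ m2 - 2 →
      wittBr (sZ (F := F) i j) (sZ k l) = sGamma (F := F) i j k l • sZext (F := F) m1 m2 (i + k) (j + l) :=
  special_bracket_zz_general F m1 m2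
end

section
/- Let S = S(2,(m_1,m_2)) be the special algebra over a field of characteristic 2 with m_1, m_2 ≥ 2. Then the derived subalgebra S' is a simple Lie algebra of dimension 2^{m_1+m_2} - 2. -/
section Binomial

variable {F : Type*} [Field F] [CharP F 2]

theorem natCast_choose_eq_choose_mod_two_mul_choose_div_two (n k : ℕ) :
    (n.choose k : F) = ((n % 2).choose (k % 2) : F) * ((n / 2).choose (k / 2) : F) := by
  rw [← Nat.cast_mul]
  exact (CharP.natCast_eq_natCast F 2).mpr Choose.choose_modEq_choose_mod_mul_choose_div_nat

theorem natCast_choose_two_pow_sub_one {m r : ℕ} (hr : r < 2 ^ m) :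
    ((2 ^ m - 1).choose r : F) = 1 := by
  induction m generalizing r with
  | zero => simp_all
  | succ m ih =>
    have hpow : 2 ^ (m + 1) = 2 * 2 ^ m := by ring
    rw [natCast_choose_eq_choose_mod_two_mul_choose_div_two,
      show (2 ^ (m + 1) - 1) % 2 = 1 by omega, show (2 ^ (m + 1) - 1) / 2 = 2 ^ m - 1 by omega,
      ih (by omega), mul_one]
    rcases Nat.mod_two_eq_zero_or_one r with h | h <;> simp [h]

theorem natCast_choose_two_pow_sub_two {m j : ℕ} (hm : 1 ≤ m) (hj : j < 2 ^ m) :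
    ((2 ^ m - 2).choose j : F) = if Even j then 1 else 0 := by
  obtain ⟨m, rfl⟩ := Nat.exists_eq_add_of_le' hm
  have hpow : 2 ^ (m + 1) = 2 * 2 ^ m := by ring
  rw [natCast_choose_eq_choose_mod_two_mul_choose_div_two,
    show (2 ^ (m + 1) - 2) % 2 = 0 by omega, show (2 ^ (m + 1) - 2) / 2 = 2 ^ m - 1 by omega,
    natCast_choose_two_pow_sub_one (by omega), mul_one]
  rcases Nat.even_or_odd j with h | h
  · simp [h, Nat.even_iff.mp h]
  · simp [Nat.not_even_iff_odd.mpr h, Nat.odd_iff.mp h]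

theorem natCast_two_pow_sub_one {m : ℕ} (hm : 1 ≤ m) : ((2 ^ m - 1 : ℕ) : F) = 1 := by
  simpa using
    natCast_choose_two_pow_sub_one (F := F) (r := 1) (Nat.one_lt_two_pow_iff.mpr (by omega))

theorem sGamma_eq_zero_of_add_eq {m1 m2 i j k l : ℕ} (hm1 : 1 ≤ m1) (hm2 : 1 ≤ m2)
    (hik : i + k = 2 ^ m1 - 2) (hjl : j + l = 2 ^ m2 - 2) : sGamma (F := F) i j k l = 0 := by
  have hpow₁ : 2 ^ 1 ≤ 2 ^ m1 := Nat.pow_le_pow_right two_pos hm1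
  have hpow₂ : 2 ^ 1 ≤ 2 ^ m2 := Nat.pow_le_pow_right two_pos hm2
  have hC (r) (hr : r < 2 ^ m2) := natCast_choose_two_pow_sub_two (F := F) hm2 hr
  unfold sGamma
  rw [show i + k + 1 = 2 ^ m1 - 1 by omega, natCast_choose_two_pow_sub_one (by omega),
    natCast_choose_two_pow_sub_one (by omega), hjl, one_mul, one_mul]
  rcases Nat.eq_zero_or_pos j with rfl | hj
  · rw [if_pos rfl, hC 1 (by omega)]
    simp
  · have hpar : Even (j - 1) ↔ Even (j + 1) := by simp only [Nat.even_iff]; omega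
    rw [if_neg hj.ne', hC (j - 1) (by omega), hC (j + 1) (by omega)]
    simp only [hpar]
    ring

end Binomial

open Module Submodule

section LinearAlgebra

variable {R M ι : Type*} [CommRing R] [AddCommGroup M] [Module R M]

theorem Module.Basis.repr_apply_eq_of_apply_basis (b : Basis ι R M) {T : M →ₗ[R] M} {s t : ι}
    (hs : T (b s) = b t) (hr : ∀ r ≠ s, b.repr (T (b r)) t = 0) (v : M) :
    b.repr (T v) t = b.repr v s := by
  have : b.coord t ∘ₗ T = b.coord s := b.ext fun r => by
    by_cases hrs : r = s
    · simp [hrs, hs]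
    · simp [hr r hrs, Ne.symm hrs]
  exact LinearMap.congr_fun this v

theorem Module.Basis.ker_coord_eq_span_image_compl (b : Basis ι R M) (i : ι) :
    LinearMap.ker (b.coord i) = span R (b '' {i}ᶜ) := by
  ext v
  simp only [LinearMap.mem_ker, Basis.coord_apply, b.mem_span_image, Set.subset_def,
    Finset.mem_coe, Finsupp.mem_support_iff, Set.mem_compl_singleton_iff]
  exact ⟨fun h j hj hji => hj (hji ▸ h), fun h => not_not.mp fun hi => h i hi rfl⟩

theorem Module.End.pow_apply_add_of_apply_succ {T : Module.End R M} {f : ℕ → M} {N : ℕ}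
    (hT : ∀ p, p + 1 < N → T (f (p + 1)) = f p) {n p : ℕ} (h : p + n < N) :
    (T ^ n) (f (p + n)) = f p := by
  induction n with
  | zero => rfl
  | succ n ih => rw [pow_succ, Module.End.mul_apply, ← add_assoc, hT _ (by omega), ih (by omega)]

theorem Module.End.pow_apply_eq_zero_of_apply_succ {T : Module.End R M} {f : ℕ → M} {N : ℕ}
    (hT : ∀ p, p + 1 < N → T (f (p + 1)) = f p) (h0 : T (f 0) = 0) {p : ℕ} (hp : p < N) :
    (T ^ N) (f p) = 0 := by
  obtain ⟨k, rfl⟩ := Nat.exists_eq_add_of_lt hp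
  have hpow := T.pow_apply_add_of_apply_succ hT (n := p) (p := 0) (by omega)
  rw [zero_add] at hpow
  rw [show p + k + 1 = k + 1 + p by omega, pow_add, pow_succ, Module.End.mul_apply,
    Module.End.mul_apply, hpow, h0, map_zero]

theorem Submodule.exists_ne_zero_apply_eq_zero_of_isNilpotent {T : Module.End R M}
    (hT : IsNilpotent T) {J : Submodule R M} (hTJ : Set.MapsTo T J J) (hJ : J ≠ ⊥) :
    ∃ u ∈ J, u ≠ 0 ∧ T u = 0 := by
  classical
  obtain ⟨v, hvJ, hv⟩ := J.ne_bot_iff.mp hJ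
  obtain ⟨N, hN⟩ := hT
  have hex : ∃ k, (T ^ k) v = 0 := ⟨N, by simp [hN]⟩
  obtain ⟨n, hn⟩ := Nat.exists_eq_add_one_of_ne_zero fun h0 : Nat.find hex = 0 =>
    hv (by simpa [h0] using Nat.find_spec hex)
  refine ⟨(T ^ n) v, ?_, Nat.find_min hex (by omega), ?_⟩
  · rw [Module.End.pow_apply]
    exact hTJ.iterate n hvJ
  · rw [← Module.End.mul_apply, ← pow_succ', ← hn]
    exact Nat.find_spec hex

theorem Submodule.exists_ne_zero_apply_eq_zero_of_commute {A B : Module.End R M}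
    (hA : IsNilpotent A) (hB : IsNilpotent B) (hAB : Commute A B) {J : Submodule R M}
    (hAJ : Set.MapsTo A J J) (hBJ : Set.MapsTo B J J) (hJ : J ≠ ⊥) :
    ∃ u ∈ J, u ≠ 0 ∧ A u = 0 ∧ B u = 0 := by
  obtain ⟨w, hwJ, hw, hAw⟩ := J.exists_ne_zero_apply_eq_zero_of_isNilpotent hA hAJ hJ
  have hBJ' : Set.MapsTo B (J ⊓ LinearMap.ker A) (J ⊓ LinearMap.ker A) := by
    rintro v ⟨hvJ, hvA⟩
    refine ⟨hBJ hvJ, ?_⟩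
    simp only [SetLike.mem_coe, LinearMap.mem_ker] at hvA ⊢
    rw [← Module.End.mul_apply, hAB.eq, Module.End.mul_apply, hvA, map_zero]
  obtain ⟨u, ⟨huJ, huA⟩, hu, hBu⟩ :=
    (J ⊓ LinearMap.ker A).exists_ne_zero_apply_eq_zero_of_isNilpotent hB hBJ'
      ((J ⊓ LinearMap.ker A).ne_bot_iff.mpr ⟨w, ⟨hwJ, hAw⟩, hw⟩)
  exact ⟨u, huJ, hu, huA, hBu⟩

end LinearAlgebra

section Lie

variable {R L : Type*} [CommRing R] [LieRing L] [LieAlgebra R L]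

theorem LieAlgebra.coe_derivedSeries_one_eq_span_image2 {s : Set L} (hs : span R s = ⊤) :
    (LieAlgebra.derivedSeries R L 1 : Submodule R L) =
      span R (Set.image2 (fun u v => ⁅u, v⁆) s s) := by
  let f : L →ₗ[R] L →ₗ[R] L := LieModule.toEnd R L L
  calc (LieAlgebra.derivedSeries R L 1 : Submodule R L)
      = span R (Set.image2 (fun u v => f u v) Set.univ Set.univ) := by
        rw [LieAlgebra.coe_derivedSeries_one_eq]
        congr 1
        ext w
        simp [f, eq_comm]
    _ = map₂ f (span R s) (span R s) := by rw [← map₂_span_span, span_univ, hs]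
    _ = span R (Set.image2 (fun u v => ⁅u, v⁆) s s) := map₂_span_span R f s s

theorem LieIdeal.isSimple_of_forall_submodule_le {K : LieIdeal R L}
    (hK : ∀ J : Submodule R L, J ≤ (K : Submodule R L) →
      (∀ w ∈ (K : Submodule R L), ∀ v ∈ J, ⁅w, v⁆ ∈ J) → J ≠ ⊥ → (K : Submodule R L) ≤ J)
    (hna : ∃ u ∈ (K : Submodule R L), ∃ v ∈ (K : Submodule R L), ⁅u, v⁆ ≠ 0) :
    LieAlgebra.IsSimple R K where
  eq_bot_or_eq_top I := by
    refine or_iff_not_imp_left.mpr fun hI => eq_top_iff.mpr fun v _ => ?_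
    let J : Submodule R L := (I : Submodule R K).map (K.incl : K →ₗ[R] L)
    obtain ⟨w, hwI, hw⟩ : ∃ w ∈ I, w ≠ 0 := by simpa [LieSubmodule.eq_bot_iff] using hI
    have hJ : (K : Submodule R L) ≤ J := by
      refine hK J ?_ ?_ (J.ne_bot_iff.mpr ⟨w, ⟨w, hwI, rfl⟩, by simpa using hw⟩)
      · rintro _ ⟨u, -, rfl⟩
        exact u.2
      · rintro u hu _ ⟨w, hw, rfl⟩
        exact ⟨⁅⟨u, hu⟩, w⁆, I.lie_mem hw, rfl⟩
    obtain ⟨u, hu, huv⟩ := hJ v.2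
    rwa [← Subtype.ext huv]
  non_abelian := by
    rintro ⟨h⟩
    obtain ⟨u, hu, v, hv, huv⟩ := hna
    exact huv (congrArg Subtype.val (h ⟨u, hu⟩ ⟨v, hv⟩))

end Lie

theorem four_le_two_pow {m : ℕ} (hm : 2 ≤ m) : 4 ≤ 2 ^ m :=
  Nat.pow_le_pow_right two_pos hm

structure IsSpecialBasis (F : Type*) {L : Type*} [Field F] [LieRing L] [LieAlgebra F L]
    (m1 m2 : ℕ) (x y : ℕ → L) (z : ℕ → ℕ → L) : Prop where
  x_eq_zero : ∀ j, 2 ^ m2 - 2 < j → x j = 0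
  y_eq_zero : ∀ i, 2 ^ m1 - 2 < i → y i = 0
  z_eq_zero : ∀ i j, 2 ^ m1 - 2 < i ∨ 2 ^ m2 - 2 < j → z i j = 0
  span_eq_top : span F (Set.range x ∪ Set.range y ∪ {w | ∃ i j, w = z i j}) = ⊤
  finrank_eq : finrank F L = 2 ^ (m1 + m2) - 1
  lie_x_x : ∀ i j, ⁅x i, x j⁆ = 0
  lie_y_y : ∀ i j, ⁅y i, y j⁆ = 0
  lie_z_z : ∀ i j k l, i ≤ 2 ^ m1 - 2 → k ≤ 2 ^ m1 - 2 → j ≤ 2 ^ m2 - 2 → l ≤ 2 ^ m2 - 2 →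
    ⁅z i j, z k l⁆ = sGamma (F := F) i j k l • z (i + k) (j + l)
  lie_x_zero_y : ∀ i, 1 ≤ i → i ≤ 2 ^ m1 - 2 → ⁅x 0, y i⁆ = y (i - 1)
  lie_x_zero_y_zero : ⁅x 0, y 0⁆ = 0
  lie_y_zero_x : ∀ j, 1 ≤ j → j ≤ 2 ^ m2 - 2 → ⁅y 0, x j⁆ = x (j - 1)
  lie_y_zero_x_zero : ⁅y 0, x 0⁆ = 0
  lie_x_y : ∀ i j, 1 ≤ i → i ≤ 2 ^ m2 - 2 → 1 ≤ j → j ≤ 2 ^ m1 - 2 →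
    ⁅x i, y j⁆ = z (j - 1) (i - 1)
  lie_x_z_zero : ∀ i k, i ≤ 2 ^ m2 - 2 → k ≤ 2 ^ m2 - 2 →
    ⁅x i, z 0 k⁆ = (Nat.choose (i + k + 1) i : F) • x (i + k)
  lie_x_z : ∀ i j k, i ≤ 2 ^ m2 - 2 → k ≤ 2 ^ m2 - 2 → 1 ≤ j → j ≤ 2 ^ m1 - 2 →
    ⁅x i, z j k⁆ = (Nat.choose (i + k + 1) i : F) • z (j - 1) (i + k)
  lie_y_z_zero : ∀ i j, i ≤ 2 ^ m1 - 2 → j ≤ 2 ^ m1 - 2 →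
    ⁅y i, z j 0⁆ = (Nat.choose (i + j + 1) i : F) • y (i + j)
  lie_y_z : ∀ i j k, i ≤ 2 ^ m1 - 2 → j ≤ 2 ^ m1 - 2 → 1 ≤ k → k ≤ 2 ^ m2 - 2 →
    ⁅y i, z j k⁆ = (Nat.choose (i + j + 1) i : F) • z (i + j) (k - 1)
  two_le_m1 : 2 ≤ m1
  two_le_m2 : 2 ≤ m2

/-- The basis vector with exponent pair `(p, q)`: `y i` sits at `(i + 1, 0)`, `x j` at `(0, j + 1)`
and `z i j` at `(i + 1, j + 1)`. In these coordinates `ad (x 0)` lowers `p` and `ad (y 0)`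
lowers `q`. -/
def specialVec {L : Type*} [Zero L] (x y : ℕ → L) (z : ℕ → ℕ → L) : ℕ × ℕ → L
  | (0, 0) => 0
  | (0, q + 1) => x q
  | (p + 1, 0) => y p
  | (p + 1, q + 1) => z p q

def specialIndex (m1 m2 : ℕ) : Finset (ℕ × ℕ) :=
  (Finset.range (2 ^ m1) ×ˢ Finset.range (2 ^ m2)).erase (0, 0)

theorem mem_specialIndex {m1 m2 : ℕ} {pq : ℕ × ℕ} :
    pq ∈ specialIndex m1 m2 ↔ pq ≠ (0, 0) ∧ pq.1 < 2 ^ m1 ∧ pq.2 < 2 ^ m2 := by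
  simp [specialIndex]

theorem card_specialIndex (m1 m2 : ℕ) : (specialIndex m1 m2).card = 2 ^ (m1 + m2) - 1 := by
  rw [specialIndex, Finset.card_erase_of_mem (by simp), Finset.card_product, Finset.card_range,
    Finset.card_range, pow_add]

namespace IsSpecialBasis

variable {F L : Type*} [Field F] [LieRing L] [LieAlgebra F L] {m1 m2 : ℕ} {x y : ℕ → L}
  {z : ℕ → ℕ → L}

theorem specialVec_eq_zero (h : IsSpecialBasis F m1 m2 x y z) {pq : ℕ × ℕ}
    (hpq : pq ∉ specialIndex m1 m2) : specialVec x y z pq = 0 := by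
  have := four_le_two_pow h.two_le_m1
  have := four_le_two_pow h.two_le_m2
  rw [mem_specialIndex] at hpq
  obtain ⟨_ | p, _ | q⟩ := pq
  · rfl
  all_goals simp only [ne_eq, Prod.mk.injEq] at hpq
  · exact h.x_eq_zero q (by omega)
  · exact h.y_eq_zero p (by omega)
  · exact h.z_eq_zero p q (by omega)

theorem top_le_span (h : IsSpecialBasis F m1 m2 x y z) :
    ⊤ ≤ span F (Set.range fun t : specialIndex m1 m2 => specialVec x y z t) := by
  have hvec (pq : ℕ × ℕ) : specialVec x y z pq ∈
      span F (Set.range fun t : specialIndex m1 m2 => specialVec x y z t) := by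
    by_cases hpq : pq ∈ specialIndex m1 m2
    · exact subset_span ⟨⟨pq, hpq⟩, rfl⟩
    · rw [h.specialVec_eq_zero hpq]
      exact zero_mem _
  rw [← h.span_eq_top, span_le]
  rintro _ ((⟨j, rfl⟩ | ⟨i, rfl⟩) | ⟨i, j, rfl⟩)
  · exact hvec (0, j + 1)
  · exact hvec (i + 1, 0)
  · exact hvec (i + 1, j + 1)

noncomputable def basis (h : IsSpecialBasis F m1 m2 x y z) : Basis (specialIndex m1 m2) F L :=
  basisOfTopLeSpanOfCardEqFinrank _ h.top_le_span
    (by rw [Fintype.card_coe, card_specialIndex, h.finrank_eq])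

theorem basis_apply (h : IsSpecialBasis F m1 m2 x y z) (t : specialIndex m1 m2) :
    h.basis t = specialVec x y z t :=
  congrFun (coe_basisOfTopLeSpanOfCardEqFinrank _ _ _) t

theorem basis_repr_specialVec (h : IsSpecialBasis F m1 m2 x y z) (pq : ℕ × ℕ)
    (t : specialIndex m1 m2) : h.basis.repr (specialVec x y z pq) t = if pq = t then 1 else 0 := by
  by_cases hpq : pq ∈ specialIndex m1 m2
  · rw [← h.basis_apply ⟨pq, hpq⟩, Basis.repr_self, Finsupp.single_apply]
    exact if_congr Subtype.ext_iff rfl rfl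
  · rw [h.specialVec_eq_zero hpq, map_zero, if_neg fun (e : pq = t) => hpq (e ▸ t.2)]
    rfl

def top (h : IsSpecialBasis F m1 m2 x y z) : specialIndex m1 m2 :=
  ⟨(2 ^ m1 - 1, 2 ^ m2 - 1), by
    have := four_le_two_pow h.two_le_m1
    have := Nat.two_pow_pos m2
    rw [mem_specialIndex]
    simp only [ne_eq, Prod.mk.injEq]
    omega⟩

noncomputable def topCoord (h : IsSpecialBasis F m1 m2 x y z) : L →ₗ[F] F :=
  h.basis.coord h.top

theorem specialVec_mem_ker_topCoord (h : IsSpecialBasis F m1 m2 x y z) {pq : ℕ × ℕ}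
    (hpq : pq ≠ (2 ^ m1 - 1, 2 ^ m2 - 1)) : specialVec x y z pq ∈ LinearMap.ker h.topCoord := by
  rw [LinearMap.mem_ker, topCoord, Basis.coord_apply, basis_repr_specialVec]
  exact if_neg hpq

theorem x_mem_ker_topCoord (h : IsSpecialBasis F m1 m2 x y z) (j : ℕ) :
    x j ∈ LinearMap.ker h.topCoord :=
  h.specialVec_mem_ker_topCoord (pq := (0, j + 1))
    (by have := four_le_two_pow h.two_le_m1; simp only [ne_eq, Prod.mk.injEq]; omega)

theorem y_mem_ker_topCoord (h : IsSpecialBasis F m1 m2 x y z) (i : ℕ) :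
    y i ∈ LinearMap.ker h.topCoord :=
  h.specialVec_mem_ker_topCoord (pq := (i + 1, 0))
    (by have := four_le_two_pow h.two_le_m2; simp only [ne_eq, Prod.mk.injEq]; omega)

theorem z_mem_ker_topCoord (h : IsSpecialBasis F m1 m2 x y z) {i j : ℕ}
    (hij : i ≠ 2 ^ m1 - 2 ∨ j ≠ 2 ^ m2 - 2) : z i j ∈ LinearMap.ker h.topCoord :=
  h.specialVec_mem_ker_topCoord (pq := (i + 1, j + 1))
    (by
      have := four_le_two_pow h.two_le_m1
      have := four_le_two_pow h.two_le_m2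
      simp only [ne_eq, Prod.mk.injEq]; omega)

theorem lie_x_zero_specialVec_succ (h : IsSpecialBasis F m1 m2 x y z) {p q : ℕ}
    (hp : p + 1 < 2 ^ m1) (hq : q < 2 ^ m2) :
    ⁅x 0, specialVec x y z (p + 1, q)⁆ = specialVec x y z (p, q) := by
  rcases p with _ | p <;> rcases q with _ | q
  · exact h.lie_x_zero_y_zero
  · simpa [specialVec] using h.lie_x_z_zero 0 q (by omega) (by omega)
  · simpa [specialVec] using h.lie_x_zero_y (p + 1) (by omega) (by omega)
  · simpa [specialVec] using h.lie_x_z 0 (p + 1) q (by omega) (by omega) (by omega) (by omega)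

theorem lie_x_zero_specialVec_zero (h : IsSpecialBasis F m1 m2 x y z) (q : ℕ) :
    ⁅x 0, specialVec x y z (0, q)⁆ = 0 := by
  rcases q with _ | q
  · exact lie_zero _
  · exact h.lie_x_x 0 q

theorem lie_y_zero_specialVec_succ (h : IsSpecialBasis F m1 m2 x y z) {p q : ℕ}
    (hp : p < 2 ^ m1) (hq : q + 1 < 2 ^ m2) :
    ⁅y 0, specialVec x y z (p, q + 1)⁆ = specialVec x y z (p, q) := by
  rcases p with _ | p <;> rcases q with _ | q
  · exact h.lie_y_zero_x_zero
  · simpa [specialVec] using h.lie_y_zero_x (q + 1) (by omega) (by omega)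
  · simpa [specialVec] using h.lie_y_z_zero 0 p (by omega) (by omega)
  · simpa [specialVec] using h.lie_y_z 0 p (q + 1) (by omega) (by omega) (by omega) (by omega)

theorem lie_y_zero_specialVec_zero (h : IsSpecialBasis F m1 m2 x y z) (p : ℕ) :
    ⁅y 0, specialVec x y z (p, 0)⁆ = 0 := by
  rcases p with _ | p
  · exact lie_zero _
  · exact h.lie_y_y 0 p

theorem ad_x_zero_pow_specialVec (h : IsSpecialBasis F m1 m2 x y z) {n p q : ℕ}
    (hp : p + n < 2 ^ m1) (hq : q < 2 ^ m2) :
    (LieAlgebra.ad F L (x 0) ^ n) (specialVec x y z (p + n, q)) = specialVec x y z (p, q) :=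
  Module.End.pow_apply_add_of_apply_succ (f := fun p => specialVec x y z (p, q))
    (fun _ hp => h.lie_x_zero_specialVec_succ hp hq) hp

theorem ad_y_zero_pow_specialVec (h : IsSpecialBasis F m1 m2 x y z) {n p q : ℕ}
    (hp : p < 2 ^ m1) (hq : q + n < 2 ^ m2) :
    (LieAlgebra.ad F L (y 0) ^ n) (specialVec x y z (p, q + n)) = specialVec x y z (p, q) :=
  Module.End.pow_apply_add_of_apply_succ (f := fun q => specialVec x y z (p, q))
    (fun _ hq => h.lie_y_zero_specialVec_succ hp hq) hq

theorem isNilpotent_ad_x_zero (h : IsSpecialBasis F m1 m2 x y z) :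
    IsNilpotent (LieAlgebra.ad F L (x 0)) :=
  ⟨2 ^ m1, h.basis.ext fun ⟨(p, q), hpq⟩ => by
    rw [mem_specialIndex] at hpq
    rw [h.basis_apply, LinearMap.zero_apply]
    exact Module.End.pow_apply_eq_zero_of_apply_succ (f := fun p => specialVec x y z (p, q))
      (fun _ hp => h.lie_x_zero_specialVec_succ hp hpq.2.2) (h.lie_x_zero_specialVec_zero q)
      hpq.2.1⟩

theorem isNilpotent_ad_y_zero (h : IsSpecialBasis F m1 m2 x y z) :
    IsNilpotent (LieAlgebra.ad F L (y 0)) :=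
  ⟨2 ^ m2, h.basis.ext fun ⟨(p, q), hpq⟩ => by
    rw [mem_specialIndex] at hpq
    rw [h.basis_apply, LinearMap.zero_apply]
    exact Module.End.pow_apply_eq_zero_of_apply_succ (f := fun q => specialVec x y z (p, q))
      (fun _ hq => h.lie_y_zero_specialVec_succ hpq.2.1 hq) (h.lie_y_zero_specialVec_zero p)
      hpq.2.2⟩

theorem commute_ad_x_zero_ad_y_zero (h : IsSpecialBasis F m1 m2 x y z) :
    Commute (LieAlgebra.ad F L (x 0)) (LieAlgebra.ad F L (y 0)) :=
  LinearMap.ext fun v => show ⁅x 0, ⁅y 0, v⁆⁆ = ⁅y 0, ⁅x 0, v⁆⁆ by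
    rw [leibniz_lie, h.lie_x_zero_y_zero, zero_lie, zero_add]

theorem basis_repr_lie_x_zero (h : IsSpecialBasis F m1 m2 x y z) {s t : specialIndex m1 m2}
    (hst : (s : ℕ × ℕ) = (t.1.1 + 1, t.1.2)) (v : L) :
    h.basis.repr ⁅x 0, v⁆ t = h.basis.repr v s := by
  refine h.basis.repr_apply_eq_of_apply_basis (T := LieAlgebra.ad F L (x 0)) ?_ ?_ v
  · have hs := mem_specialIndex.mp s.2
    rw [h.basis_apply, h.basis_apply, LieAlgebra.ad_apply, hst]
    exact h.lie_x_zero_specialVec_succ (by rw [hst] at hs; exact hs.2.1)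
      (mem_specialIndex.mp t.2).2.2
  · rintro ⟨⟨_ | p, q⟩, hr⟩ hrs
    · rw [h.basis_apply, LieAlgebra.ad_apply, h.lie_x_zero_specialVec_zero, map_zero,
        Finsupp.zero_apply]
    · have hr' := mem_specialIndex.mp hr
      rw [h.basis_apply, LieAlgebra.ad_apply, h.lie_x_zero_specialVec_succ hr'.2.1 hr'.2.2,
        basis_repr_specialVec, if_neg]
      rintro hpq
      exact hrs (Subtype.ext (by rw [hst, ← hpq]))

theorem basis_repr_lie_y_zero (h : IsSpecialBasis F m1 m2 x y z) {s t : specialIndex m1 m2}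
    (hst : (s : ℕ × ℕ) = (t.1.1, t.1.2 + 1)) (v : L) :
    h.basis.repr ⁅y 0, v⁆ t = h.basis.repr v s := by
  refine h.basis.repr_apply_eq_of_apply_basis (T := LieAlgebra.ad F L (y 0)) ?_ ?_ v
  · have hs := mem_specialIndex.mp s.2
    rw [h.basis_apply, h.basis_apply, LieAlgebra.ad_apply, hst]
    exact h.lie_y_zero_specialVec_succ (mem_specialIndex.mp t.2).2.1
      (by rw [hst] at hs; exact hs.2.2)
  · rintro ⟨⟨p, _ | q⟩, hr⟩ hrs
    · rw [h.basis_apply, LieAlgebra.ad_apply, h.lie_y_zero_specialVec_zero, map_zero,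
        Finsupp.zero_apply]
    · have hr' := mem_specialIndex.mp hr
      rw [h.basis_apply, LieAlgebra.ad_apply, h.lie_y_zero_specialVec_succ hr'.2.1 hr'.2.2,
        basis_repr_specialVec, if_neg]
      rintro hpq
      exact hrs (Subtype.ext (by rw [hst, ← hpq]))

theorem mem_span_x_zero_y_zero_of_lie_eq_zero (h : IsSpecialBasis F m1 m2 x y z) {u : L}
    (hx : ⁅x 0, u⁆ = 0) (hy : ⁅y 0, u⁆ = 0) : u ∈ span F {x 0, y 0} := by
  have hu : u ∈ span F (h.basis '' {t | (t : ℕ × ℕ) = (0, 1) ∨ (t : ℕ × ℕ) = (1, 0)}) := by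
    rw [Basis.mem_span_image]
    rintro ⟨⟨p, q⟩, hpq⟩ ht
    rw [Finset.mem_coe, Finsupp.mem_support_iff] at ht
    by_contra hS
    obtain ⟨hpq0, hp, hq⟩ := mem_specialIndex.mp hpq
    simp only [Set.mem_ofPred_eq, ne_eq, Prod.mk.injEq] at hS hpq0
    rcases p with _ | p
    · obtain ⟨q, rfl⟩ : ∃ q', q = q' + 1 := ⟨q - 1, by omega⟩
      have ht' : ((0, q) : ℕ × ℕ) ∈ specialIndex m1 m2 :=
        mem_specialIndex.mpr ⟨by simp only [ne_eq, Prod.mk.injEq]; omega, hp, by omega⟩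
      exact ht (by rw [← h.basis_repr_lie_y_zero (t := ⟨(0, q), ht'⟩) rfl, hy, map_zero,
        Finsupp.zero_apply])
    · have ht' : ((p, q) : ℕ × ℕ) ∈ specialIndex m1 m2 :=
        mem_specialIndex.mpr ⟨by simp only [ne_eq, Prod.mk.injEq]; omega, by omega, hq⟩
      exact ht (by rw [← h.basis_repr_lie_x_zero (t := ⟨(p, q), ht'⟩) rfl, hx, map_zero,
        Finsupp.zero_apply])
  refine span_mono ?_ hu
  rintro _ ⟨t, ht | ht, rfl⟩ <;> simp [h.basis_apply, ht, specialVec]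

theorem lie_x_y_mem_ker_topCoord (h : IsSpecialBasis F m1 m2 x y z) (i j : ℕ) :
    ⁅x i, y j⁆ ∈ LinearMap.ker h.topCoord := by
  rcases le_or_gt i (2 ^ m2 - 2) with hi | hi
  swap
  · rw [h.x_eq_zero i hi, zero_lie]
    exact zero_mem _
  rcases le_or_gt j (2 ^ m1 - 2) with hj | hj
  swap
  · rw [h.y_eq_zero j hj, lie_zero]
    exact zero_mem _
  rcases Nat.eq_zero_or_pos i with rfl | hi0 <;> rcases Nat.eq_zero_or_pos j with rfl | hj0
  · rw [h.lie_x_zero_y_zero]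
    exact zero_mem _
  · rw [h.lie_x_zero_y j hj0 hj]
    exact h.y_mem_ker_topCoord _
  · rw [← lie_skew, h.lie_y_zero_x i hi0 hi]
    exact neg_mem (h.x_mem_ker_topCoord _)
  · rw [h.lie_x_y i j hi0 hi hj0 hj]
    exact h.z_mem_ker_topCoord (Or.inl (by omega))

theorem lie_x_z_mem_ker_topCoord (h : IsSpecialBasis F m1 m2 x y z) (i j k : ℕ) :
    ⁅x i, z j k⁆ ∈ LinearMap.ker h.topCoord := by
  rcases le_or_gt i (2 ^ m2 - 2) with hi | hi
  swap
  · rw [h.x_eq_zero i hi, zero_lie]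
    exact zero_mem _
  by_cases hjk : 2 ^ m1 - 2 < j ∨ 2 ^ m2 - 2 < k
  · rw [h.z_eq_zero j k hjk, lie_zero]
    exact zero_mem _
  rcases Nat.eq_zero_or_pos j with rfl | hj0
  · rw [h.lie_x_z_zero i k hi (by omega)]
    exact smul_mem _ _ (h.x_mem_ker_topCoord _)
  · rw [h.lie_x_z i j k hi (by omega) hj0 (by omega)]
    exact smul_mem _ _ (h.z_mem_ker_topCoord (Or.inl (by omega)))

theorem lie_y_z_mem_ker_topCoord (h : IsSpecialBasis F m1 m2 x y z) (i j k : ℕ) :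
    ⁅y i, z j k⁆ ∈ LinearMap.ker h.topCoord := by
  rcases le_or_gt i (2 ^ m1 - 2) with hi | hi
  swap
  · rw [h.y_eq_zero i hi, zero_lie]
    exact zero_mem _
  by_cases hjk : 2 ^ m1 - 2 < j ∨ 2 ^ m2 - 2 < k
  · rw [h.z_eq_zero j k hjk, lie_zero]
    exact zero_mem _
  rcases Nat.eq_zero_or_pos k with rfl | hk0
  · rw [h.lie_y_z_zero i j hi (by omega)]
    exact smul_mem _ _ (h.y_mem_ker_topCoord _)
  · rw [h.lie_y_z i j k hi (by omega) hk0 (by omega)]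
    exact smul_mem _ _ (h.z_mem_ker_topCoord (Or.inr (by omega)))

theorem lie_z_z_mem_ker_topCoord [CharP F 2] (h : IsSpecialBasis F m1 m2 x y z) (i j k l : ℕ) :
    ⁅z i j, z k l⁆ ∈ LinearMap.ker h.topCoord := by
  by_cases hij : 2 ^ m1 - 2 < i ∨ 2 ^ m2 - 2 < j
  · rw [h.z_eq_zero i j hij, zero_lie]
    exact zero_mem _
  by_cases hkl : 2 ^ m1 - 2 < k ∨ 2 ^ m2 - 2 < l
  · rw [h.z_eq_zero k l hkl, lie_zero]
    exact zero_mem _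
  rw [h.lie_z_z i j k l (by omega) (by omega) (by omega) (by omega)]
  by_cases htop : i + k = 2 ^ m1 - 2 ∧ j + l = 2 ^ m2 - 2
  · rw [sGamma_eq_zero_of_add_eq (one_le_two.trans h.two_le_m1) (one_le_two.trans h.two_le_m2)
      htop.1 htop.2, zero_smul]
    exact zero_mem _
  · exact smul_mem _ _ (h.z_mem_ker_topCoord (by omega))

theorem lie_mem_ker_topCoord [CharP F 2] (h : IsSpecialBasis F m1 m2 x y z) {u v : L}
    (hu : u ∈ Set.range x ∪ Set.range y ∪ {w | ∃ i j, w = z i j})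
    (hv : v ∈ Set.range x ∪ Set.range y ∪ {w | ∃ i j, w = z i j}) :
    ⁅u, v⁆ ∈ LinearMap.ker h.topCoord := by
  have skew {a b : L} (hab : ⁅a, b⁆ ∈ LinearMap.ker h.topCoord) :
      ⁅b, a⁆ ∈ LinearMap.ker h.topCoord := by
    rw [← lie_skew]
    exact neg_mem hab
  rcases hu with (⟨i, rfl⟩ | ⟨i, rfl⟩) | ⟨i, j, rfl⟩ <;>
    rcases hv with (⟨k, rfl⟩ | ⟨k, rfl⟩) | ⟨k, l, rfl⟩
  · rw [h.lie_x_x]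
    exact zero_mem _
  · exact h.lie_x_y_mem_ker_topCoord i k
  · exact h.lie_x_z_mem_ker_topCoord i k l
  · exact skew (h.lie_x_y_mem_ker_topCoord k i)
  · rw [h.lie_y_y]
    exact zero_mem _
  · exact h.lie_y_z_mem_ker_topCoord i k l
  · exact skew (h.lie_x_z_mem_ker_topCoord k i j)
  · exact skew (h.lie_y_z_mem_ker_topCoord k i j)
  · exact h.lie_z_z_mem_ker_topCoord i j k l

theorem coe_derivedSeries_one [CharP F 2] (h : IsSpecialBasis F m1 m2 x y z) :
    (LieAlgebra.derivedSeries F L 1 : Submodule F L) = LinearMap.ker h.topCoord := by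
  refine le_antisymm ?_ ?_
  · rw [LieAlgebra.coe_derivedSeries_one_eq_span_image2 h.span_eq_top, span_le]
    rintro _ ⟨u, hu, v, hv, rfl⟩
    exact h.lie_mem_ker_topCoord hu hv
  · have hlie (u v : L) : ⁅u, v⁆ ∈ (LieAlgebra.derivedSeries F L 1 : Submodule F L) := by
      rw [LieAlgebra.coe_derivedSeries_one_eq]
      exact subset_span ⟨u, v, rfl⟩
    rw [topCoord, Basis.ker_coord_eq_span_image_compl, span_le]
    rintro _ ⟨⟨⟨p, q⟩, hpq⟩, htop, rfl⟩
    obtain ⟨-, hp, hq⟩ := mem_specialIndex.mp hpq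
    rw [SetLike.mem_coe, h.basis_apply]
    by_cases hp' : p + 1 < 2 ^ m1
    · rw [← h.lie_x_zero_specialVec_succ hp' hq]
      exact hlie _ _
    · have hq' : q + 1 < 2 ^ m2 := by
        by_contra hq'
        exact htop (Subtype.ext (Prod.ext (by simp only [top]; omega) (by simp only [top]; omega)))
      rw [← h.lie_y_zero_specialVec_succ hp hq']
      exact hlie _ _

theorem finrank_derivedSeries_one [CharP F 2] (h : IsSpecialBasis F m1 m2 x y z) :
    finrank F (LieAlgebra.derivedSeries F L 1) = 2 ^ (m1 + m2) - 2 := by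
  have : FiniteDimensional F L := Module.Finite.of_basis h.basis
  have hne : h.topCoord ≠ 0 := fun h0 => by
    simpa [topCoord] using LinearMap.congr_fun h0 (h.basis h.top)
  have := Module.Dual.finrank_ker_add_one_of_ne_zero hne
  rw [h.finrank_eq] at this
  change finrank F (LieAlgebra.derivedSeries F L 1 : Submodule F L) = _
  rw [h.coe_derivedSeries_one]
  omega

theorem ker_topCoord_le_of_mem (h : IsSpecialBasis F m1 m2 x y z) {J : Submodule F L}
    (hx : Set.MapsTo (LieAlgebra.ad F L (x 0)) J J) (hy : Set.MapsTo (LieAlgebra.ad F L (y 0)) J J)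
    (hz₁ : z (2 ^ m1 - 3) (2 ^ m2 - 2) ∈ J) (hz₂ : z (2 ^ m1 - 2) (2 ^ m2 - 3) ∈ J) :
    LinearMap.ker h.topCoord ≤ J := by
  have := four_le_two_pow h.two_le_m1
  have := four_le_two_pow h.two_le_m2
  rw [topCoord, Basis.ker_coord_eq_span_image_compl, span_le]
  rintro _ ⟨⟨⟨p, q⟩, hpq⟩, htop, rfl⟩
  obtain ⟨-, hp, hq⟩ := mem_specialIndex.mp hpq
  rw [SetLike.mem_coe, h.basis_apply]
  by_cases hp' : p + 1 < 2 ^ m1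
  · rw [← h.ad_x_zero_pow_specialVec (n := 2 ^ m1 - 2 - p) (by omega) hq, Module.End.pow_apply,
      show p + (2 ^ m1 - 2 - p) = 2 ^ m1 - 2 by omega]
    refine hx.iterate _ ?_
    rw [← h.ad_y_zero_pow_specialVec (n := 2 ^ m2 - 1 - q) (by omega) (by omega),
      Module.End.pow_apply, show q + (2 ^ m2 - 1 - q) = 2 ^ m2 - 1 by omega]
    refine hy.iterate _ ?_
    rwa [show (2 ^ m1 - 2, 2 ^ m2 - 1) = (2 ^ m1 - 3 + 1, 2 ^ m2 - 2 + 1) by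
      ext <;> simp only <;> omega]
  · have hq' : q + 1 < 2 ^ m2 := by
      by_contra hq'
      exact htop (Subtype.ext (Prod.ext (by simp only [top]; omega) (by simp only [top]; omega)))
    rw [← h.ad_y_zero_pow_specialVec (n := 2 ^ m2 - 2 - q) hp (by omega), Module.End.pow_apply,
      show q + (2 ^ m2 - 2 - q) = 2 ^ m2 - 2 by omega]
    refine hy.iterate _ ?_
    rwa [show (p, 2 ^ m2 - 2) = (2 ^ m1 - 2 + 1, 2 ^ m2 - 3 + 1) by ext <;> simp only <;> omega]

theorem x_zero_mem_of_ne_bot (h : IsSpecialBasis F m1 m2 x y z) {J : Submodule F L}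
    (hJ : ∀ w ∈ LinearMap.ker h.topCoord, ∀ v ∈ J, ⁅w, v⁆ ∈ J) (hJ0 : J ≠ ⊥) : x 0 ∈ J := by
  obtain ⟨u, huJ, hu0, hxu, hyu⟩ := J.exists_ne_zero_apply_eq_zero_of_commute
    h.isNilpotent_ad_x_zero h.isNilpotent_ad_y_zero h.commute_ad_x_zero_ad_y_zero
    (fun v hv => hJ _ (h.x_mem_ker_topCoord 0) v hv)
    (fun v hv => hJ _ (h.y_mem_ker_topCoord 0) v hv) hJ0
  obtain ⟨a, b, rfl⟩ := mem_span_pair.mp (h.mem_span_x_zero_y_zero_of_lie_eq_zero hxu hyu)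
  by_cases hb : b = 0
  · subst hb
    rw [zero_smul, add_zero] at huJ hu0
    have ha : a ≠ 0 := by
      rintro rfl
      exact hu0 (zero_smul _ _)
    simpa [ha] using J.smul_mem a⁻¹ huJ
  · have hbr : ⁅x 1, a • x 0 + b • y 0⁆ = -(b • x 0) := by
      rw [lie_add, lie_smul, lie_smul, h.lie_x_x, smul_zero, zero_add, ← lie_skew,
        h.lie_y_zero_x 1 le_rfl (by have := four_le_two_pow h.two_le_m2; omega), smul_neg]
    have := J.smul_mem (-b⁻¹) (hbr ▸ hJ _ (h.x_mem_ker_topCoord 1) _ huJ)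
    simpa [hb] using this

theorem ker_topCoord_le [CharP F 2] (h : IsSpecialBasis F m1 m2 x y z) {J : Submodule F L}
    (hJ : ∀ w ∈ LinearMap.ker h.topCoord, ∀ v ∈ J, ⁅w, v⁆ ∈ J) (hJ0 : J ≠ ⊥) :
    LinearMap.ker h.topCoord ≤ J := by
  have := four_le_two_pow h.two_le_m1
  have := four_le_two_pow h.two_le_m2
  have hJ' {w v : L} (hv : v ∈ J) (hw : w ∈ LinearMap.ker h.topCoord) : ⁅v, w⁆ ∈ J := by
    rw [← lie_skew]
    exact neg_mem (hJ w hw v hv)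
  have hx0 := h.x_zero_mem_of_ne_bot hJ hJ0
  have hy0 : y 0 ∈ J := by
    simpa [h.lie_x_zero_y 1 le_rfl (by omega)] using hJ' hx0 (h.y_mem_ker_topCoord 1)
  have hy1 : y 1 ∈ J := by
    simpa [h.lie_y_z_zero 0 1 (by omega) (by omega)] using
      hJ' hy0 (h.z_mem_ker_topCoord (i := 1) (j := 0) (Or.inr (by omega)))
  have hz₂ : z (2 ^ m1 - 2) (2 ^ m2 - 3) ∈ J := by
    have := hJ' hy1 (h.z_mem_ker_topCoord (i := 2 ^ m1 - 3) (j := 2 ^ m2 - 2) (Or.inl (by omega)))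
    rwa [h.lie_y_z 1 (2 ^ m1 - 3) (2 ^ m2 - 2) (by omega) (by omega) (by omega) le_rfl,
      show 1 + (2 ^ m1 - 3) = 2 ^ m1 - 2 by omega, show 2 ^ m1 - 2 + 1 = 2 ^ m1 - 1 by omega,
      show 2 ^ m2 - 2 - 1 = 2 ^ m2 - 3 by omega, Nat.choose_one_right,
      natCast_two_pow_sub_one (one_le_two.trans h.two_le_m1), one_smul] at this
  have hz₁ : z (2 ^ m1 - 3) (2 ^ m2 - 2) ∈ J := by
    have := hJ _ (h.x_mem_ker_topCoord 1) _ hz₂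
    rwa [h.lie_x_z 1 (2 ^ m1 - 2) (2 ^ m2 - 3) (by omega) (by omega) (by omega) le_rfl,
      show 1 + (2 ^ m2 - 3) = 2 ^ m2 - 2 by omega, show 2 ^ m2 - 2 + 1 = 2 ^ m2 - 1 by omega,
      show 2 ^ m1 - 2 - 1 = 2 ^ m1 - 3 by omega, Nat.choose_one_right,
      natCast_two_pow_sub_one (one_le_two.trans h.two_le_m2), one_smul] at this
  exact h.ker_topCoord_le_of_mem (fun v hv => hJ _ (h.x_mem_ker_topCoord 0) v hv)
    (fun v hv => hJ _ (h.y_mem_ker_topCoord 0) v hv) hz₁ hz₂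

theorem isSimple_derivedSeries_one [CharP F 2] (h : IsSpecialBasis F m1 m2 x y z) :
    LieAlgebra.IsSimple F (LieAlgebra.derivedSeries F L 1) := by
  have hy0 : y 0 ≠ 0 := by
    have := four_le_two_pow h.two_le_m1
    simpa [h.basis_apply, specialVec] using
      h.basis.ne_zero ⟨(1, 0), mem_specialIndex.mpr ⟨by simp, by omega, Nat.two_pow_pos m2⟩⟩
  refine LieIdeal.isSimple_of_forall_submodule_le (fun J _ hJ hJ0 => ?_) ⟨x 0, ?_, y 1, ?_, ?_⟩
  · rw [h.coe_derivedSeries_one] at hJ ⊢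
    exact h.ker_topCoord_le hJ hJ0
  · rw [h.coe_derivedSeries_one]
    exact h.x_mem_ker_topCoord 0
  · rw [h.coe_derivedSeries_one]
    exact h.y_mem_ker_topCoord 1
  · rwa [h.lie_x_zero_y 1 le_rfl (by have := four_le_two_pow h.two_le_m1; omega)]

end IsSpecialBasis

/-- For the special algebra `S = S(2,(m₁,m₂))` over a field of
characteristic 2 with `m₁, m₂ ≥ 2`, the derived subalgebra `S'` is a simple Lie
algebra of dimension `2^{m₁+m₂} - 2`. -/
theorem special_derived_simple
    (F : Type*) [Field F] [CharP F 2] (m1 m2 : ℕ)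
    (L : Type*) [LieRing L] [LieAlgebra F L]
    (x y : ℕ → L) (z : ℕ → ℕ → L)
    -- basis elements, extended by zero outside their index ranges:
    (hx0 : ∀ j, 2 ^ m2 - 2 < j → x j = 0)
    (hy0 : ∀ i, 2 ^ m1 - 2 < i → y i = 0)
    (hz0 : ∀ i j, 2 ^ m1 - 2 < i ∨ 2 ^ m2 - 2 < j → z i j = 0)
    (hspan : Submodule.span F
      (Set.range x ∪ Set.range y ∪ {w | ∃ i j, w = z i j}) = ⊤)
    (hdim : Module.finrank F L = 2 ^ (m1 + m2) - 1)
    -- the bracket relations of S(2,(m1,m2)):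
    (hxx : ∀ i j, ⁅x i, x j⁆ = 0)
    (hyy : ∀ i j, ⁅y i, y j⁆ = 0)
    (hzz : ∀ i j k l, i ≤ 2 ^ m1 - 2 → k ≤ 2 ^ m1 - 2 → j ≤ 2 ^ m2 - 2 → l ≤ 2 ^ m2 - 2 →
      ⁅z i j, z k l⁆ = sGamma (F := F) i j k l • z (i + k) (j + l))
    (hx0y : ∀ i, 1 ≤ i → i ≤ 2 ^ m1 - 2 → ⁅x 0, y i⁆ = y (i - 1))
    (hx0y0 : ⁅x 0, y 0⁆ = 0)
    (hy0x : ∀ j, 1 ≤ j → j ≤ 2 ^ m2 - 2 → ⁅y 0, x j⁆ = x (j - 1))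
    (hy0x0 : ⁅y 0, x 0⁆ = 0)
    (hxy : ∀ i j, 1 ≤ i → i ≤ 2 ^ m2 - 2 → 1 ≤ j → j ≤ 2 ^ m1 - 2 →
      ⁅x i, y j⁆ = z (j - 1) (i - 1))
    (hxz0 : ∀ i k, i ≤ 2 ^ m2 - 2 → k ≤ 2 ^ m2 - 2 →
      ⁅x i, z 0 k⁆ = (Nat.choose (i + k + 1) i : F) • x (i + k))
    (hxz : ∀ i j k, i ≤ 2 ^ m2 - 2 → k ≤ 2 ^ m2 - 2 → 1 ≤ j → j ≤ 2 ^ m1 - 2 →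
      ⁅x i, z j k⁆ = (Nat.choose (i + k + 1) i : F) • z (j - 1) (i + k))
    (hyz0 : ∀ i j, i ≤ 2 ^ m1 - 2 → j ≤ 2 ^ m1 - 2 →
      ⁅y i, z j 0⁆ = (Nat.choose (i + j + 1) i : F) • y (i + j))
    (hyz : ∀ i j k, i ≤ 2 ^ m1 - 2 → j ≤ 2 ^ m1 - 2 → 1 ≤ k → k ≤ 2 ^ m2 - 2 →
      ⁅y i, z j k⁆ = (Nat.choose (i + j + 1) i : F) • z (i + j) (k - 1))
    (hm1 : 2 ≤ m1) (hm2 : 2 ≤ m2) :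
    LieAlgebra.IsSimple F (LieAlgebra.derivedSeries F L 1) ∧
      Module.finrank F (LieAlgebra.derivedSeries F L 1) = 2 ^ (m1 + m2) - 2 := by
  have h : IsSpecialBasis F m1 m2 x y z := ⟨hx0, hy0, hz0, hspan, hdim, hxx, hyy, hzz, hx0y, hx0y0,
    hy0x, hy0x0, hxy, hxz0, hxz, hyz0, hyz, hm1, hm2⟩
  exact ⟨h.isSimple_derivedSeries_one, h.finrank_derivedSeries_one⟩
end

section
/- Let I be a nonzero ideal of S' = S(2,(m_1,m_2))' over a field of characteristic 2. If I contains a nonzero element of the form v = Σ λ_i x_i + Σ μ_j y_j (all z-coefficients zero), then x_0 ∈ I. -/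
/-!
`ad y₀` lowers the index of the `xᵢ` and `ad x₀` that of the `yⱼ`, each killing the bottom
element, and `x₀, x₁, y₀` are brackets, hence lie in `S'`. If `v` has no `y`-part, applying
`ad y₀` as often as the top index `K` with `λ_K ≠ 0` leaves `λ_K x₀ ∈ I`. Otherwise applying
`ad x₀` as often as the top index `M` with `μ_M ≠ 0` leaves `μ_M y₀` plus a combination of the
`xᵢ`, and `ad x₁` maps this to `μ_M x₀`: `x₁` commutes with every `xᵢ` (so `ad x₁` commutes with
`ad x₀`), and `[x₁, y₀] = x₀` by the Jacobi identity applied to `y₀ = [x₀, y₁]`.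
-/

open Finset LieAlgebra

namespace Module.End

variable {R M : Type*} [Semiring R] [AddCommMonoid M] [Module R M]
  {φ : Module.End R M} {e : ℕ → M} {n : ℕ}

theorem pow_apply_of_lowering (h0 : φ (e 0) = 0)
    (hsucc : ∀ i, i + 1 < n → φ (e (i + 1)) = e i) (k : ℕ) {i : ℕ} (hi : i < n) :
    (φ ^ k) (e i) = if k ≤ i then e (i - k) else 0 := by
  induction k generalizing i with
  | zero => simp
  | succ k ih =>
    rw [pow_succ, mul_apply]
    rcases i with _ | i
    · simp [h0]
    · rw [hsucc i hi, ih (by omega)]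
      simp [Nat.add_sub_add_right]

theorem exists_pow_apply_sum_smul_of_lowering (h0 : φ (e 0) = 0)
    (hsucc : ∀ i, i + 1 < n → φ (e (i + 1)) = e i) {c : ℕ → R} (hc : ∃ i < n, c i ≠ 0) :
    ∃ K, c K ≠ 0 ∧ (φ ^ K) (∑ i ∈ range n, c i • e i) = c K • e 0 := by
  classical
  obtain ⟨i₀, hi₀, hci₀⟩ := hc
  set K := Nat.findGreatest (fun i ↦ c i ≠ 0) (n - 1)
  have hKn : K < n := by have := Nat.findGreatest_le (P := fun i ↦ c i ≠ 0) (n - 1); omega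
  have hK : c K ≠ 0 := Nat.findGreatest_spec (P := fun i ↦ c i ≠ 0) (by omega : i₀ ≤ n - 1) hci₀
  refine ⟨K, hK, ?_⟩
  rw [map_sum, sum_eq_single_of_mem K (mem_range.2 hKn)]
  · rw [map_smul, pow_apply_of_lowering h0 hsucc K hKn, if_pos le_rfl, Nat.sub_self]
  · intro i hi hiK
    rw [map_smul, pow_apply_of_lowering h0 hsucc K (mem_range.1 hi)]
    rcases lt_or_gt_of_ne hiK with hlt | hgt
    · rw [if_neg (by omega), smul_zero]
    · rw [not_not.1 (Nat.findGreatest_is_greatest hgt (by have := mem_range.1 hi; omega)),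
        zero_smul]

end Module.End

section CommRing

variable {R L : Type*} [CommRing R] [LieRing L] [LieAlgebra R L]

theorem LieAlgebra.lie_mem_derivedSeries_one_s10 (a b : L) : ⁅a, b⁆ ∈ derivedSeries R L 1 :=
  LieSubmodule.lie_mem_lie (LieSubmodule.mem_top a) (LieSubmodule.mem_top b)

theorem LieAlgebra.lie_ad_pow_apply_of_lie_eq_zero {a b : L} (h : ⁅a, b⁆ = 0) (k : ℕ) (w : L) :
    ⁅a, (ad R L b ^ k) w⁆ = (ad R L b ^ k) ⁅a, w⁆ := by
  induction k with
  | zero => rfl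
  | succ k ih =>
    rw [pow_succ', Module.End.mul_apply, ad_apply, leibniz_lie, h, zero_lie, zero_add, ih,
      Module.End.mul_apply, ad_apply]

theorem LieIdeal.ad_pow_apply_mem (I : LieIdeal R L) (a : L) {w : L} (hw : w ∈ I) (k : ℕ) :
    (ad R L a ^ k) w ∈ I := by
  rw [Module.End.pow_apply]
  exact Set.MapsTo.iterate (fun _ h ↦ I.lie_mem h) k hw

theorem LieIdeal.coe_ad_pow (K : LieIdeal R L) (a w : K) (k : ℕ) :
    ((ad R K a ^ k) w : L) = (ad R L a ^ k) w :=
  LieSubalgebra.coe_ad_pow R L K.toLieSubalgebra a w k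

end CommRing

namespace LieIdeal

variable {R L : Type*} [Field R] [LieRing L] [LieAlgebra R L] {K : LieIdeal R L}

theorem mk_mem_of_coe_eq_smul (I : LieIdeal R K) {w : K} (hw : w ∈ I) {a : L} (ha : a ∈ K)
    {c : R} (hc : c ≠ 0) (h : (w : L) = c • a) : (⟨a, ha⟩ : K) ∈ I := by
  have : (⟨a, ha⟩ : K) = c⁻¹ • w := Subtype.ext (by simp [h, smul_smul, inv_mul_cancel₀ hc])
  exact this ▸ I.smul_mem _ hw

theorem mk_mem_of_lowering (I : LieIdeal R K) {a : L} (ha : a ∈ K) {e : ℕ → L} (he0 : e 0 ∈ K)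
    {n : ℕ} (h0 : ⁅a, e 0⁆ = 0) (hsucc : ∀ i, i + 1 < n → ⁅a, e (i + 1)⁆ = e i)
    {v : K} (hv : v ∈ I) {c : ℕ → R} (hvc : (v : L) = ∑ i ∈ range n, c i • e i)
    (hv0 : (v : L) ≠ 0) : (⟨e 0, he0⟩ : K) ∈ I := by
  have hc : ∃ i < n, c i ≠ 0 := by
    by_contra! h
    exact hv0 (hvc.trans (sum_eq_zero fun i hi ↦ by rw [h i (mem_range.1 hi), zero_smul]))
  obtain ⟨k, hk, hvk⟩ :=
    Module.End.exists_pow_apply_sum_smul_of_lowering (φ := ad R L a) h0 hsucc hc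
  exact mk_mem_of_coe_eq_smul I (I.ad_pow_apply_mem ⟨a, ha⟩ hv k) he0 hk
    (by rw [coe_ad_pow, hvc, hvk])

theorem mk_mem_of_lie_lowering (I : LieIdeal R K) {a b d : L} (ha : a ∈ K) (hb : b ∈ K)
    (hd : d ∈ K) (hab : ⁅b, a⁆ = 0) {f : ℕ → L} {n : ℕ} (h0 : ⁅a, f 0⁆ = 0)
    (hsucc : ∀ i, i + 1 < n → ⁅a, f (i + 1)⁆ = f i) (hbf : ⁅b, f 0⁆ = d) {u : L}
    (hu : ⁅b, u⁆ = 0) {v : K} (hv : v ∈ I) {c : ℕ → R}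
    (hvc : (v : L) = u + ∑ i ∈ range n, c i • f i) (hc : ∃ i < n, c i ≠ 0) :
    (⟨d, hd⟩ : K) ∈ I := by
  obtain ⟨k, hk, hfk⟩ :=
    Module.End.exists_pow_apply_sum_smul_of_lowering (φ := ad R L a) h0 hsucc hc
  refine mk_mem_of_coe_eq_smul I
    (I.lie_mem (x := ⟨b, hb⟩) (I.ad_pow_apply_mem ⟨a, ha⟩ hv k)) hd hk ?_
  calc ⁅b, ((ad R K ⟨a, ha⟩ ^ k) v : L)⁆
      = (ad R L a ^ k) ⁅b, u⁆ + ⁅b, (ad R L a ^ k) (∑ i ∈ range n, c i • f i)⁆ := by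
        rw [coe_ad_pow, hvc, map_add, lie_add, lie_ad_pow_apply_of_lie_eq_zero hab]
    _ = c k • d := by rw [hu, map_zero, zero_add, hfk, lie_smul, hbf]

end LieIdeal

theorem special_derived_ideal_contains_x0_general
    (F : Type*) [Field F] (m1 m2 : ℕ)
    (L : Type*) [LieRing L] [LieAlgebra F L]
    (x y : ℕ → L) (z : ℕ → ℕ → L)
    -- the bracket relations of S(2,(m1,m2)):
    (hxx : ∀ i j, ⁅x i, x j⁆ = 0)
    (hx0y : ∀ i, 1 ≤ i → i ≤ 2 ^ m1 - 2 → ⁅x 0, y i⁆ = y (i - 1))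
    (hx0y0 : ⁅x 0, y 0⁆ = 0)
    (hy0x : ∀ j, 1 ≤ j → j ≤ 2 ^ m2 - 2 → ⁅y 0, x j⁆ = x (j - 1))
    (hy0x0 : ⁅y 0, x 0⁆ = 0)
    (hxy : ∀ i j, 1 ≤ i → i ≤ 2 ^ m2 - 2 → 1 ≤ j → j ≤ 2 ^ m1 - 2 →
      ⁅x i, y j⁆ = z (j - 1) (i - 1))
    (hxz0 : ∀ i k, i ≤ 2 ^ m2 - 2 → k ≤ 2 ^ m2 - 2 →
      ⁅x i, z 0 k⁆ = (Nat.choose (i + k + 1) i : F) • x (i + k))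
    (hm1 : 2 ≤ m1) (hm2 : 2 ≤ m2) :
    ∀ I : LieIdeal F (LieAlgebra.derivedSeries F L 1), I ≠ ⊥ →
      ∀ v : LieAlgebra.derivedSeries F L 1, v ∈ I → (v : L) ≠ 0 →
      (∃ lam mu : ℕ → F, (v : L) =
          ∑ i ∈ Finset.range (2 ^ m2 - 1), lam i • x i +
            ∑ j ∈ Finset.range (2 ^ m1 - 1), mu j • y j) →
      ∃ h : x 0 ∈ LieAlgebra.derivedSeries F L 1,
        (⟨x 0, h⟩ : LieAlgebra.derivedSeries F L 1) ∈ I := by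
  rintro I - v hvI hv0 ⟨lam, mu, hv⟩
  have h4m1 : 4 ≤ 2 ^ m1 := le_trans (by norm_num) (Nat.pow_le_pow_right two_pos hm1)
  have h4m2 : 4 ≤ 2 ^ m2 := le_trans (by norm_num) (Nat.pow_le_pow_right two_pos hm2)
  have hx0S : x 0 ∈ derivedSeries F L 1 :=
    hy0x 1 le_rfl (by omega) ▸ lie_mem_derivedSeries_one_s10 (y 0) (x 1)
  have hx1S : x 1 ∈ derivedSeries F L 1 :=
    hy0x 2 (by omega) (by omega) ▸ lie_mem_derivedSeries_one_s10 (y 0) (x 2)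
  have hy0S : y 0 ∈ derivedSeries F L 1 :=
    hx0y 1 le_rfl (by omega) ▸ lie_mem_derivedSeries_one_s10 (x 0) (y 1)
  have hx1y0 : ⁅x 1, y 0⁆ = x 0 := by
    rw [← hx0y 1 le_rfl (by omega), leibniz_lie, hxx, zero_lie, zero_add,
      hxy 1 1 le_rfl (by omega) le_rfl (by omega), hxz0 0 0 (by omega) (by omega)]
    simp
  refine ⟨hx0S, ?_⟩
  by_cases hmu : ∃ j < 2 ^ m1 - 1, mu j ≠ 0
  · exact LieIdeal.mk_mem_of_lie_lowering I hx0S hx1S hx0S (hxx 1 0) (n := 2 ^ m1 - 1) hx0y0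
      (fun i hi ↦ hx0y (i + 1) (by omega) (by omega)) hx1y0 (by simp [lie_sum, hxx]) hvI hv hmu
  · push Not at hmu
    refine LieIdeal.mk_mem_of_lowering I hy0S hx0S (n := 2 ^ m2 - 1) hy0x0
      (fun i hi ↦ hy0x (i + 1) (by omega) (by omega)) hvI (c := lam) ?_ hv0
    rw [hv, sum_eq_zero (s := range (2 ^ m1 - 1))
      fun j hj ↦ by rw [hmu j (mem_range.1 hj), zero_smul], add_zero]

/-- Let `I` be a nonzero ideal of `S' = S(2,(m₁,m₂))'` over a
field of characteristic 2. If `I` contains a nonzero element of the form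
`v = Σ λᵢ xᵢ + Σ μⱼ yⱼ` (all `z`-coefficients zero), then `x₀ ∈ I`. -/
theorem special_derived_ideal_contains_x0
    (F : Type*) [Field F] [CharP F 2] (m1 m2 : ℕ)
    (L : Type*) [LieRing L] [LieAlgebra F L]
    (x y : ℕ → L) (z : ℕ → ℕ → L)
    -- basis elements, extended by zero outside their index ranges:
    (hx0 : ∀ j, 2 ^ m2 - 2 < j → x j = 0)
    (hy0 : ∀ i, 2 ^ m1 - 2 < i → y i = 0)
    (hz0 : ∀ i j, 2 ^ m1 - 2 < i ∨ 2 ^ m2 - 2 < j → z i j = 0)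
    (hspan : Submodule.span F
      (Set.range x ∪ Set.range y ∪ {w | ∃ i j, w = z i j}) = ⊤)
    (hdim : Module.finrank F L = 2 ^ (m1 + m2) - 1)
    -- the bracket relations of S(2,(m1,m2)):
    (hxx : ∀ i j, ⁅x i, x j⁆ = 0)
    (hyy : ∀ i j, ⁅y i, y j⁆ = 0)
    (hzz : ∀ i j k l, i ≤ 2 ^ m1 - 2 → k ≤ 2 ^ m1 - 2 → j ≤ 2 ^ m2 - 2 → l ≤ 2 ^ m2 - 2 →
      ⁅z i j, z k l⁆ = sGamma (F := F) i j k l • z (i + k) (j + l))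
    (hx0y : ∀ i, 1 ≤ i → i ≤ 2 ^ m1 - 2 → ⁅x 0, y i⁆ = y (i - 1))
    (hx0y0 : ⁅x 0, y 0⁆ = 0)
    (hy0x : ∀ j, 1 ≤ j → j ≤ 2 ^ m2 - 2 → ⁅y 0, x j⁆ = x (j - 1))
    (hy0x0 : ⁅y 0, x 0⁆ = 0)
    (hxy : ∀ i j, 1 ≤ i → i ≤ 2 ^ m2 - 2 → 1 ≤ j → j ≤ 2 ^ m1 - 2 →
      ⁅x i, y j⁆ = z (j - 1) (i - 1))
    (hxz0 : ∀ i k, i ≤ 2 ^ m2 - 2 → k ≤ 2 ^ m2 - 2 →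
      ⁅x i, z 0 k⁆ = (Nat.choose (i + k + 1) i : F) • x (i + k))
    (hxz : ∀ i j k, i ≤ 2 ^ m2 - 2 → k ≤ 2 ^ m2 - 2 → 1 ≤ j → j ≤ 2 ^ m1 - 2 →
      ⁅x i, z j k⁆ = (Nat.choose (i + k + 1) i : F) • z (j - 1) (i + k))
    (hyz0 : ∀ i j, i ≤ 2 ^ m1 - 2 → j ≤ 2 ^ m1 - 2 →
      ⁅y i, z j 0⁆ = (Nat.choose (i + j + 1) i : F) • y (i + j))
    (hyz : ∀ i j k, i ≤ 2 ^ m1 - 2 → j ≤ 2 ^ m1 - 2 → 1 ≤ k → k ≤ 2 ^ m2 - 2 →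
      ⁅y i, z j k⁆ = (Nat.choose (i + j + 1) i : F) • z (i + j) (k - 1))
    (hm1 : 2 ≤ m1) (hm2 : 2 ≤ m2) :
    ∀ I : LieIdeal F (LieAlgebra.derivedSeries F L 1), I ≠ ⊥ →
      ∀ v : LieAlgebra.derivedSeries F L 1, v ∈ I → (v : L) ≠ 0 →
      (∃ lam mu : ℕ → F, (v : L) =
          ∑ i ∈ Finset.range (2 ^ m2 - 1), lam i • x i +
            ∑ j ∈ Finset.range (2 ^ m1 - 1), mu j • y j) →
      ∃ h : x 0 ∈ LieAlgebra.derivedSeries F L 1,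
        (⟨x 0, h⟩ : LieAlgebra.derivedSeries F L 1) ∈ I :=
  special_derived_ideal_contains_x0_general F m1 m2 L x y z hxx hx0y hx0y0 hy0x hy0x0 hxy hxz0 hm1
    hm2
end
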